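/- arXiv:1704.05703 — 10 statements merged into one kernel-verified Lean document; each statement's English description precedes it below -/
import Mathlib

section
/- For positive definite density matrices ρ, σ on ℂ^d, the function α ↦ log Tr[ρ^α σ^{1-α}] is convex on the interval (0,1). -/
open Matrix
open scoped BigOperators ComplexOrder

noncomputable section

variable {n : Type*} [Fintype n] [DecidableEq n]

/-- Apply a real function spectrally to a Hermitian matrix (junk value `0` otherwise). -/
def specFun (f : ℝ → ℝ) (A : Matrix n n ℂ) : Matrix n n ℂ :=
  if hA : A.IsHermitian then
    (hA.eigenvectorUnitary : Matrix n n ℂ) *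
      Matrix.diagonal (fun i => ((f (hA.eigenvalues i) : ℝ) : ℂ)) *
      star (hA.eigenvectorUnitary : Matrix n n ℂ)
  else 0

/-- Spectral real power of a matrix (`0 ^ α = 0` for `α ∈ (0,1)` via `Real.rpow`). -/
def mPow (A : Matrix n n ℂ) (α : ℝ) : Matrix n n ℂ := specFun (fun x => x ^ α) A

/-- The Petz quantity `Q_α(ρ‖σ) = Tr[ρ^α σ^{1-α}]`. -/
def Qpetz (ρ σ : Matrix n n ℂ) (α : ℝ) : ℝ := ((mPow ρ α * mPow σ (1 - α)).trace).re

/-- log of a positive combination of exponentials is convex. -/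
lemma aux_logConvex_sum_exp {ι : Type*} (s : Finset ι) (w t : ι → ℝ)
    (hw : ∀ p ∈ s, 0 ≤ w p) (hpos : 0 < ∑ p ∈ s, w p) :
    ConvexOn ℝ Set.univ (fun α => Real.log (∑ p ∈ s, w p * Real.exp (α * t p))) := by
  have hg : ∀ z : ℝ, 0 < ∑ p ∈ s, w p * Real.exp (z * t p) := by
    intro z
    obtain ⟨p0, hp0s, hp0⟩ : ∃ p ∈ s, 0 < w p := by
      by_contra h
      push_neg at h
      have : ∑ p ∈ s, w p ≤ 0 := Finset.sum_nonpos h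
      linarith
    refine Finset.sum_pos' (fun p hp => mul_nonneg (hw p hp) (Real.exp_pos _).le)
      ⟨p0, hp0s, mul_pos hp0 (Real.exp_pos _)⟩
  refine ⟨convex_univ, fun x _ y _ a b ha hb hab => ?_⟩
  set X := ∑ p ∈ s, w p * Real.exp (x * t p) with hX
  set Y := ∑ p ∈ s, w p * Real.exp (y * t p) with hY
  have hXp : 0 < X := hg x
  have hYp : 0 < Y := hg y
  have key : ∑ p ∈ s, w p * Real.exp ((a * x + b * y) * t p) ≤ X ^ a * Y ^ b := by
    have hstep : ∀ p ∈ s,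
        w p * Real.exp ((a * x + b * y) * t p) ≤
          (X ^ a * Y ^ b) * (w p * (a * (Real.exp (x * t p) / X) + b * (Real.exp (y * t p) / Y))) := by
      intro p hp
      have hE : Real.exp ((a * x + b * y) * t p)
          = Real.exp (x * t p) ^ a * Real.exp (y * t p) ^ b := by
        rw [show (a * x + b * y) * t p = (x * t p) * a + (y * t p) * b by ring,
          Real.exp_add, Real.exp_mul (x * t p) a, Real.exp_mul (y * t p) b]
      have hfact : Real.exp (x * t p) ^ a * Real.exp (y * t p) ^ b
          = (X ^ a * Y ^ b) * ((Real.exp (x * t p) / X) ^ a * (Real.exp (y * t p) / Y) ^ b) := by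
        rw [Real.div_rpow (Real.exp_pos _).le hXp.le, Real.div_rpow (Real.exp_pos _).le hYp.le]
        field_simp
      have hAM : (Real.exp (x * t p) / X) ^ a * (Real.exp (y * t p) / Y) ^ b
          ≤ a * (Real.exp (x * t p) / X) + b * (Real.exp (y * t p) / Y) :=
        Real.geom_mean_le_arith_mean2_weighted ha hb (by positivity) (by positivity) hab
      calc w p * Real.exp ((a * x + b * y) * t p)
          = w p * ((X ^ a * Y ^ b) * ((Real.exp (x * t p) / X) ^ a * (Real.exp (y * t p) / Y) ^ b)) := by
            rw [hE, hfact]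
        _ ≤ w p * ((X ^ a * Y ^ b) * (a * (Real.exp (x * t p) / X) + b * (Real.exp (y * t p) / Y))) := by
            refine mul_le_mul_of_nonneg_left (mul_le_mul_of_nonneg_left hAM (by positivity)) (hw p hp)
        _ = (X ^ a * Y ^ b) * (w p * (a * (Real.exp (x * t p) / X) + b * (Real.exp (y * t p) / Y))) := by
            ring
    calc ∑ p ∈ s, w p * Real.exp ((a * x + b * y) * t p)
        ≤ ∑ p ∈ s, (X ^ a * Y ^ b) * (w p * (a * (Real.exp (x * t p) / X) + b * (Real.exp (y * t p) / Y))) :=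
          Finset.sum_le_sum hstep
      _ = X ^ a * Y ^ b := by
          rw [← Finset.mul_sum]
          have h1 : ∀ p ∈ s, w p * (a * (Real.exp (x * t p) / X) + b * (Real.exp (y * t p) / Y))
              = a / X * (w p * Real.exp (x * t p)) + b / Y * (w p * Real.exp (y * t p)) := by
            intro p _
            field_simp
          rw [Finset.sum_congr rfl h1, Finset.sum_add_distrib, ← Finset.mul_sum, ← Finset.mul_sum,
            ← hX, ← hY, div_mul_cancel₀ a hXp.ne', div_mul_cancel₀ b hYp.ne', hab, mul_one]
  have hlog := Real.log_le_log (hg (a * x + b * y)) key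
  simp only [smul_eq_mul]
  calc Real.log (∑ p ∈ s, w p * Real.exp ((a * x + b * y) * t p)) ≤ Real.log (X ^ a * Y ^ b) := hlog
    _ = a * Real.log X + b * Real.log Y := by
        rw [Real.log_mul (by positivity) (by positivity), Real.log_rpow hXp, Real.log_rpow hYp]

/-- `α ↦ log Tr[ρ^α σ^{1-α}]` is convex on `(0,1)` for positive definite density matrices. -/
theorem convexOn_log_Qpetz {d : ℕ} (ρ σ : Matrix (Fin d) (Fin d) ℂ)
    (hρ : ρ.PosDef) (hσ : σ.PosDef) (hρ1 : ρ.trace = 1) (hσ1 : σ.trace = 1) :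
    ConvexOn ℝ (Set.Ioo (0 : ℝ) 1) (fun α => Real.log (Qpetz ρ σ α)) := by
  have hρh : ρ.IsHermitian := hρ.1
  have hσh : σ.IsHermitian := hσ.1
  set U : Matrix (Fin d) (Fin d) ℂ := (hρh.eigenvectorUnitary : Matrix (Fin d) (Fin d) ℂ) with hU
  set V : Matrix (Fin d) (Fin d) ℂ := (hσh.eigenvectorUnitary : Matrix (Fin d) (Fin d) ℂ) with hV
  set W : Matrix (Fin d) (Fin d) ℂ := star U * V with hW
  set lam : Fin d → ℝ := hρh.eigenvalues with hlam
  set mu : Fin d → ℝ := hσh.eigenvalues with hmu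
  have hlamp : ∀ i, 0 < lam i := fun i => hρ.eigenvalues_pos i
  have hmup : ∀ j, 0 < mu j := fun j => hσ.eigenvalues_pos j
  have hUU : U * star U = 1 := hρh.eigenvectorUnitary.2.2
  have hsUU : star U * U = 1 := hρh.eigenvectorUnitary.2.1
  have hVV : V * star V = 1 := hσh.eigenvectorUnitary.2.2
  have hsVV : star V * V = 1 := hσh.eigenvectorUnitary.2.1
  -- the trace formula
  have hQ : ∀ α : ℝ, Qpetz ρ σ α
      = ∑ i, ∑ j, (lam i ^ α * mu j ^ (1 - α)) * Complex.normSq (W i j) := by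
    intro α
    have hmat : mPow ρ α * mPow σ (1 - α)
        = U * (Matrix.diagonal (fun i => ((lam i ^ α : ℝ) : ℂ)) * W
            * Matrix.diagonal (fun j => ((mu j ^ (1 - α) : ℝ) : ℂ)) * star W) * star U := by
      rw [show mPow ρ α = U * Matrix.diagonal (fun i => ((lam i ^ α : ℝ) : ℂ)) * star U from by
            rw [mPow, specFun, dif_pos hρh],
          show mPow σ (1 - α) = V * Matrix.diagonal (fun j => ((mu j ^ (1 - α) : ℝ) : ℂ)) * star V from by
            rw [mPow, specFun, dif_pos hσh]]
      have hsW : star W = star V * U := by rw [hW, StarMul.star_mul, star_star]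
      rw [hW, hsW]
      simp only [Matrix.mul_assoc, hsVV, hUU, hVV, hsUU, Matrix.mul_one, Matrix.one_mul]
    have htr : (mPow ρ α * mPow σ (1 - α)).trace
        = (Matrix.diagonal (fun i => ((lam i ^ α : ℝ) : ℂ)) * W
            * Matrix.diagonal (fun j => ((mu j ^ (1 - α) : ℝ) : ℂ)) * star W).trace := by
      rw [hmat, Matrix.trace_mul_cycle, ← Matrix.mul_assoc, hsUU, Matrix.one_mul]
    have hexp : (Matrix.diagonal (fun i => ((lam i ^ α : ℝ) : ℂ)) * W
            * Matrix.diagonal (fun j => ((mu j ^ (1 - α) : ℝ) : ℂ)) * star W).trace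
        = ∑ i, ∑ j, ((lam i ^ α : ℝ) : ℂ) * ((mu j ^ (1 - α) : ℝ) : ℂ) * (W i j * star (W i j)) := by
      simp [Matrix.trace, Matrix.diag, Matrix.mul_apply, Matrix.diagonal_apply, Finset.sum_ite_eq,
        Matrix.star_apply, Finset.mul_sum, Finset.sum_mul]
      congr 1; ext i; congr 1; ext j; ring
    rw [Qpetz, htr, hexp]
    rw [Complex.re_sum]
    apply Finset.sum_congr rfl
    intro i _
    rw [Complex.re_sum]
    apply Finset.sum_congr rfl
    intro j _
    have hc : W i j * star (W i j) = ((Complex.normSq (W i j) : ℝ) : ℂ) := by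
      simpa using Complex.mul_conj (W i j)
    rw [hc]
    push_cast
    simp
  -- rewrite to exponential form
  have hQ2 : ∀ α : ℝ, Qpetz ρ σ α
      = ∑ p : Fin d × Fin d, (Complex.normSq (W p.1 p.2) * mu p.2)
          * Real.exp (α * (Real.log (lam p.1) - Real.log (mu p.2))) := by
    intro α
    rw [hQ α,
      show (Finset.univ : Finset (Fin d × Fin d)) = Finset.univ ×ˢ Finset.univ from
        Finset.univ_product_univ.symm, Finset.sum_product]
    apply Finset.sum_congr rfl
    intro i _
    apply Finset.sum_congr rfl
    intro j _
    have h1 : lam i ^ α = Real.exp (α * Real.log (lam i)) := by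
      rw [Real.rpow_def_of_pos (hlamp i), mul_comm]
    have h2 : mu j ^ (1 - α) = Real.exp ((1 - α) * Real.log (mu j)) := by
      rw [Real.rpow_def_of_pos (hmup j), mul_comm]
    rw [h1, h2, ← Real.exp_add, show α * Real.log (lam i) + (1 - α) * Real.log (mu j)
        = α * (Real.log (lam i) - Real.log (mu j)) + Real.log (mu j) by ring, Real.exp_add,
      Real.exp_log (hmup j)]
    ring
  -- positivity of total weight
  have hsum : ∀ j, ∑ i, Complex.normSq (W i j) = 1 := by
    intro j
    have hWW : star W * W = 1 := by
      rw [hW, StarMul.star_mul, star_star, Matrix.mul_assoc, ← Matrix.mul_assoc U, hUU,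
        Matrix.one_mul, hsVV]
    have h2 := congrArg (fun M => (M j j).re) hWW
    simpa [Matrix.mul_apply, Matrix.star_apply, Complex.re_sum, Complex.normSq_apply,
      Matrix.one_apply] using h2
  have hne : Nonempty (Fin d) := by
    by_contra h
    rw [not_nonempty_iff] at h
    rw [Matrix.trace] at hσ1
    simp [Finset.univ_eq_empty] at hσ1
  have hwpos : 0 < ∑ p : Fin d × Fin d, Complex.normSq (W p.1 p.2) * mu p.2 := by
    have : ∑ p : Fin d × Fin d, Complex.normSq (W p.1 p.2) * mu p.2
        = ∑ j, mu j := by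
      rw [show (Finset.univ : Finset (Fin d × Fin d)) = Finset.univ ×ˢ Finset.univ from
        Finset.univ_product_univ.symm, Finset.sum_product_right]
      apply Finset.sum_congr rfl
      intro j _
      show ∑ x, Complex.normSq (W x j) * mu j = mu j
      rw [← Finset.sum_mul, hsum j, one_mul]
    rw [this]
    exact Finset.sum_pos (fun j _ => hmup j) Finset.univ_nonempty
  have hconv := aux_logConvex_sum_exp (Finset.univ : Finset (Fin d × Fin d))
    (fun p => Complex.normSq (W p.1 p.2) * mu p.2)
    (fun p => Real.log (lam p.1) - Real.log (mu p.2))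
    (fun p _ => mul_nonneg (Complex.normSq_nonneg _) (hmup p.2).le) hwpos
  have heq : (fun α => Real.log (Qpetz ρ σ α))
      = fun α => Real.log (∑ p : Fin d × Fin d, (Complex.normSq (W p.1 p.2) * mu p.2)
          * Real.exp (α * (Real.log (lam p.1) - Real.log (mu p.2)))) := by
    funext α
    rw [hQ2 α]
  rw [heq]
  exact hconv.subset (Set.subset_univ _) (convex_Ioo 0 1)

end
end

section
/- For positive definite density matrices ρ, σ on ℂ^d, the Petz Rényi divergence D_α(ρ‖σ) := (1/(α-1)) log Tr[ρ^α σ^{1-α}] is monotone increasing in α on (0,1). -/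
/-! Diagonalising ρ = Σ pᵢ |uᵢ⟩⟨uᵢ| and σ = Σ qⱼ |vⱼ⟩⟨vⱼ| gives
Tr[ρ^α σ^{1-α}] = Σᵢⱼ |⟨uᵢ, vⱼ⟩|² qⱼ (pᵢ/qⱼ)^α, a nonnegative combination of exponentials in α,
so f(α) = log Tr[ρ^α σ^{1-α}] is convex by Hölder's inequality. As f(1) = log Tr ρ = 0,
D_α(ρ‖σ) = (f(α) - f(1))/(α - 1) is the slope of the secant of f through 1, which is monotone in α
by convexity. -/

open Matrix
open scoped BigOperators ComplexOrder

noncomputable section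

variable {n : Type*} [Fintype n] [DecidableEq n]

/-- The Petz Rényi divergence `D_α(ρ‖σ) = (1/(α-1)) log Tr[ρ^α σ^{1-α}]`. -/
def petzD (ρ σ : Matrix n n ℂ) (α : ℝ) : ℝ :=
  (1 / (α - 1)) * Real.log (((mPow ρ α * mPow σ (1 - α)).trace).re)

section LogConvex

variable {ι : Type*} {w r : ι → ℝ}

theorem sum_mul_rpow_le_rpow_mul_rpow (s : Finset ι) (hw : ∀ i, 0 ≤ w i) (hr : ∀ i, 0 < r i)
    {a b : ℝ} (ha : 0 < a) (hb : 0 < b) (hab : a + b = 1) (x y : ℝ) :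
    ∑ i ∈ s, w i * r i ^ (a * x + b * y) ≤
      (∑ i ∈ s, w i * r i ^ x) ^ a * (∑ i ∈ s, w i * r i ^ y) ^ b := by
  have hpq : Real.HolderConjugate a⁻¹ b⁻¹ :=
    ⟨by rw [inv_inv, inv_inv, hab, inv_one], inv_pos.mpr ha, inv_pos.mpr hb⟩
  have hnonneg (z : ℝ) (i : ι) : 0 ≤ w i * r i ^ z :=
    mul_nonneg (hw i) (Real.rpow_nonneg (hr i).le z)
  have hsplit (i : ι) :
      w i * r i ^ (a * x + b * y) = (w i * r i ^ x) ^ a * (w i * r i ^ y) ^ b := by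
    rw [Real.mul_rpow (hw i) (Real.rpow_nonneg (hr i).le x),
      Real.mul_rpow (hw i) (Real.rpow_nonneg (hr i).le y), ← Real.rpow_mul (hr i).le,
      ← Real.rpow_mul (hr i).le, mul_mul_mul_comm, ← Real.rpow_add' (hw i) (by simp [hab]),
      ← Real.rpow_add (hr i), hab, Real.rpow_one, mul_comm x, mul_comm y]
  have hroot {c : ℝ} (hc : 0 < c) (z : ℝ) (i : ι) : ((w i * r i ^ z) ^ c) ^ c⁻¹ = w i * r i ^ z :=
    Real.rpow_rpow_inv (hnonneg z i) hc.ne'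
  simpa only [hsplit, hroot ha, hroot hb, one_div, inv_inv] using
    Real.inner_le_Lp_mul_Lq_of_nonneg s hpq (fun i _ => Real.rpow_nonneg (hnonneg x i) a)
      (fun i _ => Real.rpow_nonneg (hnonneg y i) b)

theorem convexOn_log_sum_mul_rpow (s : Finset ι) (hw : ∀ i, 0 ≤ w i) (hr : ∀ i, 0 < r i) :
    ConvexOn ℝ Set.univ (fun x : ℝ => Real.log (∑ i ∈ s, w i * r i ^ x)) := by
  by_cases hzero : ∀ i ∈ s, w i = 0
  · have hsum (x : ℝ) : ∑ i ∈ s, w i * r i ^ x = 0 :=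
      Finset.sum_eq_zero fun i hi => by rw [hzero i hi, zero_mul]
    simpa only [hsum, Real.log_zero] using convexOn_const (𝕜 := ℝ) (0 : ℝ) convex_univ
  push Not at hzero
  obtain ⟨i₀, hi₀, hw₀⟩ := hzero
  have hpos (x : ℝ) : 0 < ∑ i ∈ s, w i * r i ^ x :=
    Finset.sum_pos' (fun i _ => mul_nonneg (hw i) (Real.rpow_nonneg (hr i).le x))
      ⟨i₀, hi₀, mul_pos ((hw i₀).lt_of_ne' hw₀) (Real.rpow_pos_of_pos (hr i₀) x)⟩
  refine convexOn_iff_forall_pos.mpr ⟨convex_univ, fun x _ y _ a b ha hb hab => ?_⟩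
  calc Real.log (∑ i ∈ s, w i * r i ^ (a • x + b • y))
      ≤ Real.log ((∑ i ∈ s, w i * r i ^ x) ^ a * (∑ i ∈ s, w i * r i ^ y) ^ b) :=
        Real.log_le_log (hpos _) (sum_mul_rpow_le_rpow_mul_rpow s hw hr ha hb hab x y)
    _ = a • Real.log (∑ i ∈ s, w i * r i ^ x) + b • Real.log (∑ i ∈ s, w i * r i ^ y) := by
        rw [Real.log_mul (Real.rpow_pos_of_pos (hpos x) a).ne' (Real.rpow_pos_of_pos (hpos y) b).ne',
          Real.log_rpow (hpos x), Real.log_rpow (hpos y), smul_eq_mul, smul_eq_mul]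

end LogConvex

section SpectralPower

variable {A : Matrix n n ℂ}

theorem Matrix.IsHermitian.mPow_eq (hA : A.IsHermitian) (γ : ℝ) :
    mPow A γ = (hA.eigenvectorUnitary : Matrix n n ℂ) *
      diagonal (fun i => ((hA.eigenvalues i ^ γ : ℝ) : ℂ)) *
      star (hA.eigenvectorUnitary : Matrix n n ℂ) := by
  rw [mPow, specFun, dif_pos hA]

theorem Matrix.IsHermitian.mPow_zero (hA : A.IsHermitian) : mPow A 0 = 1 := by
  simp [hA.mPow_eq]

theorem Matrix.IsHermitian.mPow_one (hA : A.IsHermitian) : mPow A 1 = A := by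
  conv_rhs => rw [hA.spectral_theorem]
  simp [hA.mPow_eq, Function.comp_def]

theorem trace_conj_diagonal_mul_conj_diagonal (U V : Matrix n n ℂ) (p q : n → ℝ) :
    (U * diagonal (fun i => (p i : ℂ)) * star U * (V * diagonal (fun j => (q j : ℂ)) * star V)).trace
      = ((∑ i, ∑ j, p i * q j * Complex.normSq ((star U * V) i j) : ℝ) : ℂ) := by
  have hcycle : (U * diagonal (fun i => (p i : ℂ)) * star U *
      (V * diagonal (fun j => (q j : ℂ)) * star V)).trace =
      (diagonal (fun i => (p i : ℂ)) * (star U * V) * diagonal (fun j => (q j : ℂ)) *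
        star (star U * V)).trace := by
    simp only [star_mul, star_star, Matrix.mul_assoc]
    rw [Matrix.trace_mul_comm U]
    simp only [Matrix.mul_assoc]
  rw [hcycle]
  simp only [trace, diag, mul_apply, diagonal_apply, star_apply, ite_mul, zero_mul, mul_ite,
    mul_zero, Finset.sum_ite_eq, Finset.sum_ite_eq', Finset.mem_univ, if_true]
  push_cast
  refine Finset.sum_congr rfl fun i _ => Finset.sum_congr rfl fun j _ => ?_
  rw [Complex.star_def, Complex.normSq_eq_conj_mul_self]
  ring

end SpectralPower

section PetzDivergence

variable {ρ σ : Matrix n n ℂ}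

theorem convexOn_log_re_trace_mPow_mul_mPow_one_sub (hρ : ρ.PosDef) (hσ : σ.PosDef) :
    ConvexOn ℝ Set.univ (fun α : ℝ => Real.log (mPow ρ α * mPow σ (1 - α)).trace.re) := by
  have hA := hρ.isHermitian
  have hB := hσ.isHermitian
  have hp : ∀ i, 0 < hA.eigenvalues i := hρ.eigenvalues_pos
  have hq : ∀ j, 0 < hB.eigenvalues j := hσ.eigenvalues_pos
  let w (k : n × n) : ℝ := Complex.normSq
    ((star (hA.eigenvectorUnitary : Matrix n n ℂ) * hB.eigenvectorUnitary) k.1 k.2) *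
      hB.eigenvalues k.2
  let r (k : n × n) : ℝ := hA.eigenvalues k.1 / hB.eigenvalues k.2
  have htrace (α : ℝ) : (mPow ρ α * mPow σ (1 - α)).trace.re = ∑ k, w k * r k ^ α := by
    rw [hA.mPow_eq, hB.mPow_eq, trace_conj_diagonal_mul_conj_diagonal, Complex.ofReal_re,
      Fintype.sum_prod_type]
    refine Finset.sum_congr rfl fun i _ => Finset.sum_congr rfl fun j _ => ?_
    simp only [w, r]
    rw [Real.div_rpow (hp i).le (hq j).le, Real.rpow_sub (hq j), Real.rpow_one]
    field_simp
  simpa only [htrace] using convexOn_log_sum_mul_rpow Finset.univ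
    (fun (k : n × n) => mul_nonneg (Complex.normSq_nonneg _) (hq k.2).le)
    (fun (k : n × n) => div_pos (hp k.1) (hq k.2))

theorem petzD_eq_slope (hρ : ρ.IsHermitian) (hσ : σ.IsHermitian) (hρ1 : ρ.trace = 1) :
    petzD ρ σ = slope (fun α : ℝ => Real.log (mPow ρ α * mPow σ (1 - α)).trace.re) 1 := by
  funext α
  simp only [petzD, slope_def_field, sub_self, hρ.mPow_one, hσ.mPow_zero, Matrix.mul_one, hρ1,
    Complex.one_re, Real.log_one, sub_zero]
  ring

end PetzDivergence

theorem monotoneOn_petzD_general {d : ℕ} (ρ σ : Matrix (Fin d) (Fin d) ℂ)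
    (hρ : ρ.PosDef) (hσ : σ.PosDef) (hρ1 : ρ.trace = 1) :
    MonotoneOn (fun α => petzD ρ σ α) (Set.Ioo (0 : ℝ) 1) := by
  rw [petzD_eq_slope hρ.isHermitian hσ.isHermitian hρ1]
  exact ((convexOn_log_re_trace_mPow_mul_mPow_one_sub hρ hσ).monotoneOn_slope_lt
    (Set.mem_univ 1)).mono fun α hα => ⟨Set.mem_univ α, hα.2⟩

/-- The Petz Rényi divergence is monotone increasing in `α` on `(0,1)`. -/
theorem monotoneOn_petzD {d : ℕ} (ρ σ : Matrix (Fin d) (Fin d) ℂ)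
    (hρ : ρ.PosDef) (hσ : σ.PosDef) (hρ1 : ρ.trace = 1) (hσ1 : σ.trace = 1) :
    MonotoneOn (fun α => petzD ρ σ α) (Set.Ioo (0 : ℝ) 1) :=
  monotoneOn_petzD_general ρ σ hρ hσ hρ1

end
end

section
/- Let ρ, σ be density matrices on ℂ^d with Nussbaum–Szkoła distributions p, q. Then for every α ∈ (0,1), Tr[ρ^α σ^{1-α}] = Σ_{i,j} p(i,j)^α q(i,j)^{1-α}, i.e. the Petz Rényi divergence of (ρ,σ) equals the classical Rényi divergence of (p,q). -/
open Matrix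
open scoped BigOperators ComplexOrder

noncomputable section

variable {n : Type*} [Fintype n] [DecidableEq n]

/-- The Nussbaum–Szkoła distribution built from spectral data `(λ, x, y)`:
`p(i,j) = λ_i |⟨x_i|y_j⟩|²`. -/
def nsDist {d : ℕ} (lam : Fin d → ℝ) (x y : Fin d → (Fin d → ℂ)) (i j : Fin d) : ℝ :=
  lam i * Complex.normSq (star (x i) ⬝ᵥ y j)

/-! Spectral calculus acts on an eigenvector `x_i` of `ρ` by `λ_i ↦ f λ_i`, and a matrix is
determined by its action on an orthonormal basis, so `ρ^α = Σ_i λ_i^α |x_i⟩⟨x_i|`, and likewise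
for `σ^{1-α}`. Hence `Tr[ρ^α σ^{1-α}] = Σ_{i,j} λ_i^α γ_j^{1-α} |⟨x_i|y_j⟩|²`, which is
`Σ_{i,j} p(i,j)^α q(i,j)^{1-α}` after splitting `|⟨x_i|y_j⟩|²` into its `α`-th and
`(1-α)`-th powers. -/

lemma Real.mul_rpow_mul_mul_rpow_one_sub {a b c : ℝ} (ha : 0 ≤ a) (hb : 0 ≤ b) (hc : 0 ≤ c)
    (α : ℝ) : (a * c) ^ α * (b * c) ^ (1 - α) = a ^ α * b ^ (1 - α) * c := by
  rw [Real.mul_rpow ha hc, Real.mul_rpow hb hc]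
  calc a ^ α * c ^ α * (b ^ (1 - α) * c ^ (1 - α))
      = a ^ α * b ^ (1 - α) * (c ^ α * c ^ (1 - α)) := by ring
    _ = a ^ α * b ^ (1 - α) * c := by
      rw [← Real.rpow_add' hc (by norm_num), add_sub_cancel, Real.rpow_one]

lemma Complex.normSq_star_dotProduct_comm {m : Type*} [Fintype m] (u v : m → ℂ) :
    Complex.normSq (star v ⬝ᵥ u) = Complex.normSq (star u ⬝ᵥ v) := by
  rw [star_dotProduct, Complex.star_def, Complex.normSq_conj]

namespace Matrix

variable {m ι κ : Type*}

lemma sum_smul_vecMulVec_star_mulVec [Fintype m] [Fintype ι] [DecidableEq ι] {x : ι → m → ℂ}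
    (hx : ∀ i k, star (x i) ⬝ᵥ x k = if i = k then 1 else 0) (c : ι → ℂ) (j : ι) :
    (∑ i, c i • vecMulVec (x i) (star (x i))) *ᵥ x j = c j • x j := by
  simp only [sum_mulVec, smul_mulVec, vecMulVec_mulVec, hx, op_smul_eq_smul, ite_smul, one_smul,
    zero_smul, smul_ite, smul_zero, Finset.sum_ite_eq', Finset.mem_univ, if_true]

lemma isHermitian_sum_smul_vecMulVec_star [Fintype ι] (x : ι → m → ℂ) (c : ι → ℝ) :
    (∑ i, (c i : ℂ) • vecMulVec (x i) (star (x i))).IsHermitian := by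
  simp [IsHermitian, conjTranspose_sum, conjTranspose_smul]

lemma ext_of_mulVec_orthonormal [Fintype m] [DecidableEq m] {x : m → m → ℂ}
    (hx : ∀ i k, star (x i) ⬝ᵥ x k = if i = k then 1 else 0) {M N : Matrix m m ℂ}
    (h : ∀ j, M *ᵥ x j = N *ᵥ x j) : M = N := by
  set P : Matrix m m ℂ := (of x)ᵀ
  have hP : P * star P = 1 := mul_eq_one_comm.mp <| by
    ext i k
    simpa [mul_apply, star_apply, one_apply, dotProduct, P, mul_comm] using hx i k
  have hMP : M * P = N * P := by
    ext k j
    simpa [mul_apply, mulVec, dotProduct, P] using congrFun (h j) k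
  calc M = M * P * star P := by rw [Matrix.mul_assoc, hP, Matrix.mul_one]
    _ = N := by rw [hMP, Matrix.mul_assoc, hP, Matrix.mul_one]

lemma PosSemidef.nonneg_of_mulVec_eq_smul [Fintype m] {A : Matrix m m ℂ} (hA : A.PosSemidef)
    {v : m → ℂ} {c : ℝ} (hv : A *ᵥ v = (c : ℂ) • v) (hv1 : star v ⬝ᵥ v = 1) : 0 ≤ c := by
  have h := hA.dotProduct_mulVec_nonneg v
  rwa [hv, dotProduct_smul, hv1, smul_eq_mul, mul_one, Complex.zero_le_real] at h

lemma trace_vecMulVec_star_mul_vecMulVec_star [Fintype m] (u v : m → ℂ) :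
    (vecMulVec u (star u) * vecMulVec v (star v)).trace = Complex.normSq (star u ⬝ᵥ v) := by
  rw [vecMulVec_mul_vecMulVec, trace_vecMulVec, dotProduct_smul, dotProduct_star,
    dotProduct_comm v, smul_eq_mul, Complex.star_def, Complex.mul_conj]

lemma trace_sum_smul_vecMulVec_star_mul_sum [Fintype m] [Fintype ι] [Fintype κ]
    (a : ι → ℝ) (b : κ → ℝ) (x : ι → m → ℂ) (y : κ → m → ℂ) :
    ((∑ i, (a i : ℂ) • vecMulVec (x i) (star (x i))) *
        ∑ j, (b j : ℂ) • vecMulVec (y j) (star (y j))).trace =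
      ((∑ i, ∑ j, a i * b j * Complex.normSq (star (x i) ⬝ᵥ y j) : ℝ) : ℂ) := by
  simp only [Finset.sum_mul_sum, trace_sum, Matrix.smul_mul, Matrix.mul_smul, trace_smul,
    trace_vecMulVec_star_mul_vecMulVec_star, smul_eq_mul]
  push_cast
  exact Finset.sum_congr rfl fun i _ => Finset.sum_congr rfl fun j _ => by ring

section SpecFun

variable [Fintype m] [DecidableEq m]

lemma diagonal_comp_mulVec_of_mulVec_eq_smul {e : m → ℝ} {w : m → ℂ} {c : ℝ}
    (hw : diagonal (fun k => (e k : ℂ)) *ᵥ w = (c : ℂ) • w) (f : ℝ → ℝ) :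
    diagonal (fun k => (f (e k) : ℂ)) *ᵥ w = (f c : ℂ) • w := by
  ext k
  have hk := congrFun hw k
  simp only [mulVec_diagonal, Pi.smul_apply, smul_eq_mul] at hk ⊢
  rcases eq_or_ne (w k) 0 with h0 | h0
  · simp [h0]
  · rw [show e k = c by exact_mod_cast mul_right_cancel₀ h0 hk]

lemma specFun_mulVec_of_mulVec_eq_smul {A : Matrix m m ℂ} (hA : A.IsHermitian) {v : m → ℂ}
    {c : ℝ} (hv : A *ᵥ v = (c : ℂ) • v) (f : ℝ → ℝ) :
    specFun f A *ᵥ v = (f c : ℂ) • v := by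
  set U : Matrix m m ℂ := (hA.eigenvectorUnitary : Matrix m m ℂ)
  have hU : U * star U = 1 := Unitary.coe_mul_star_self _
  have hv' : v = U *ᵥ (star U *ᵥ v) := by rw [mulVec_mulVec, hU, one_mulVec]
  have hdiag : diagonal (fun k => (hA.eigenvalues k : ℂ)) *ᵥ (star U *ᵥ v)
      = (c : ℂ) • (star U *ᵥ v) := by
    have hD : star U * A * U = diagonal (fun k => (hA.eigenvalues k : ℂ)) := by
      simpa [Function.comp_def] using hA.conjStarAlgAut_star_eigenvectorUnitary
    rw [← mulVec_smul, ← hv, ← hD, mulVec_mulVec, Matrix.mul_assoc, Matrix.mul_assoc, hU,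
      Matrix.mul_one, mulVec_mulVec]
  rw [specFun, dif_pos hA, ← mulVec_mulVec, ← mulVec_mulVec,
    diagonal_comp_mulVec_of_mulVec_eq_smul hdiag, mulVec_smul, ← hv']

lemma specFun_sum_smul_vecMulVec_star {x : m → m → ℂ}
    (hx : ∀ i k, star (x i) ⬝ᵥ x k = if i = k then 1 else 0) (c : m → ℝ) (f : ℝ → ℝ) :
    specFun f (∑ i, (c i : ℂ) • vecMulVec (x i) (star (x i))) =
      ∑ i, (f (c i) : ℂ) • vecMulVec (x i) (star (x i)) :=
  ext_of_mulVec_orthonormal hx fun j => by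
    rw [specFun_mulVec_of_mulVec_eq_smul (isHermitian_sum_smul_vecMulVec_star x c)
      (sum_smul_vecMulVec_star_mulVec hx _ j), sum_smul_vecMulVec_star_mulVec hx]

end SpecFun

end Matrix

theorem petz_eq_classical_ns_general {d : ℕ} (ρ σ : Matrix (Fin d) (Fin d) ℂ)
    (hρ : ρ.PosSemidef) (hσ : σ.PosSemidef)
    (lam gam : Fin d → ℝ) (x y : Fin d → (Fin d → ℂ))
    (hx : ∀ i k, star (x i) ⬝ᵥ x k = if i = k then 1 else 0)
    (hy : ∀ i k, star (y i) ⬝ᵥ y k = if i = k then 1 else 0)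
    (hρdec : ρ = ∑ i, (lam i : ℂ) • Matrix.vecMulVec (x i) (star (x i)))
    (hσdec : σ = ∑ j, (gam j : ℂ) • Matrix.vecMulVec (y j) (star (y j)))
    (α : ℝ) :
    ((mPow ρ α * mPow σ (1 - α)).trace).re =
      ∑ i, ∑ j, (nsDist lam x y i j) ^ α * (nsDist gam y x j i) ^ (1 - α) := by
  have hlam : ∀ i, 0 ≤ lam i := fun i =>
    hρ.nonneg_of_mulVec_eq_smul (hρdec ▸ sum_smul_vecMulVec_star_mulVec hx _ i) (by simp [hx])
  have hgam : ∀ j, 0 ≤ gam j := fun j =>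
    hσ.nonneg_of_mulVec_eq_smul (hσdec ▸ sum_smul_vecMulVec_star_mulVec hy _ j) (by simp [hy])
  rw [mPow, mPow, hρdec, hσdec, specFun_sum_smul_vecMulVec_star hx,
    specFun_sum_smul_vecMulVec_star hy, trace_sum_smul_vecMulVec_star_mul_sum, Complex.ofReal_re]
  refine Finset.sum_congr rfl fun i _ => Finset.sum_congr rfl fun j _ => ?_
  rw [nsDist, nsDist, Complex.normSq_star_dotProduct_comm,
    Real.mul_rpow_mul_mul_rpow_one_sub (hlam i) (hgam j) (Complex.normSq_nonneg _)]

/-- The Petz Rényi quantity of `(ρ,σ)` equals the classical Rényi quantity of the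
Nussbaum–Szkoła distributions: `Tr[ρ^α σ^{1-α}] = Σ_{i,j} p(i,j)^α q(i,j)^{1-α}`. -/
theorem petz_eq_classical_ns {d : ℕ} (ρ σ : Matrix (Fin d) (Fin d) ℂ)
    (hρ : ρ.PosSemidef) (hσ : σ.PosSemidef) (hρ1 : ρ.trace = 1) (hσ1 : σ.trace = 1)
    (lam gam : Fin d → ℝ) (x y : Fin d → (Fin d → ℂ))
    (hx : ∀ i k, star (x i) ⬝ᵥ x k = if i = k then 1 else 0)
    (hy : ∀ i k, star (y i) ⬝ᵥ y k = if i = k then 1 else 0)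
    (hρdec : ρ = ∑ i, (lam i : ℂ) • Matrix.vecMulVec (x i) (star (x i)))
    (hσdec : σ = ∑ j, (gam j : ℂ) • Matrix.vecMulVec (y j) (star (y j)))
    (α : ℝ) (hα : α ∈ Set.Ioo (0 : ℝ) 1) :
    ((mPow ρ α * mPow σ (1 - α)).trace).re =
      ∑ i, ∑ j, (nsDist lam x y i j) ^ α * (nsDist gam y x j i) ^ (1 - α) :=
  petz_eq_classical_ns_general ρ σ hρ hσ lam gam x y hx hy hρdec hσdec α

end
end

section
/- Let ρ, σ be density matrices on ℂ^d with Nussbaum–Szkoła distributions p, q. Then the support of ρ is contained in the support of σ if and only if the support of p is contained in the support of q (as functions on [d]×[d]). -/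
open Matrix
open scoped BigOperators ComplexOrder

noncomputable section

lemma dot_sum_smul {d : ℕ} (w : Fin d → ℂ) (f : Fin d → ℂ) (u : Fin d → (Fin d → ℂ)) :
    w ⬝ᵥ (∑ i, f i • u i) = ∑ i, f i * (w ⬝ᵥ u i) := by
  simp only [dotProduct, Finset.sum_apply, Pi.smul_apply, smul_eq_mul, Finset.mul_sum,
    Finset.sum_mul]
  rw [Finset.sum_comm]
  exact Finset.sum_congr rfl fun i _ => Finset.sum_congr rfl fun k _ => by ring

lemma mulVec_decomp {d : ℕ} (M : Matrix (Fin d) (Fin d) ℂ) (c : Fin d → ℝ)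
    (u : Fin d → (Fin d → ℂ))
    (hdec : M = ∑ i, (c i : ℂ) • Matrix.vecMulVec (u i) (star (u i))) (v : Fin d → ℂ) :
    M *ᵥ v = ∑ i, ((c i : ℂ) * (star (u i) ⬝ᵥ v)) • u i := by
  funext k
  simp only [hdec, mulVec, dotProduct, Finset.sum_apply, Matrix.sum_apply, Matrix.smul_apply,
    Matrix.vecMulVec_apply, Pi.smul_apply, smul_eq_mul, Finset.sum_mul, Finset.mul_sum]
  rw [Finset.sum_comm]
  exact Finset.sum_congr rfl fun i _ => Finset.sum_congr rfl fun m _ => by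
    simp [Pi.star_apply]; ring

/-- kernel characterization for an orthonormal decomposition -/
lemma ker_iff {d : ℕ} (M : Matrix (Fin d) (Fin d) ℂ) (c : Fin d → ℝ)
    (u : Fin d → (Fin d → ℂ))
    (hu : ∀ i k, star (u i) ⬝ᵥ u k = if i = k then 1 else 0)
    (hdec : M = ∑ i, (c i : ℂ) • Matrix.vecMulVec (u i) (star (u i))) (v : Fin d → ℂ) :
    M *ᵥ v = 0 ↔ ∀ i, (c i : ℂ) * (star (u i) ⬝ᵥ v) = 0 := by
  rw [mulVec_decomp M c u hdec v]
  constructor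
  · intro h i
    have h2 := congrArg (fun w => star (u i) ⬝ᵥ w) h
    simpa [dot_sum_smul, hu] using h2
  · intro h
    rw [Finset.sum_congr rfl fun i _ => by rw [h i]]
    simp

/-- `supp ρ ⊆ supp σ` (equivalently `ker σ ⊆ ker ρ` for positive semidefinite matrices)
iff the support of the Nussbaum–Szkoła distribution `p` is contained in that of `q`. -/
theorem ns_support_iff {d : ℕ} (ρ σ : Matrix (Fin d) (Fin d) ℂ)
    (hρ : ρ.PosSemidef) (hσ : σ.PosSemidef) (hρ1 : ρ.trace = 1) (hσ1 : σ.trace = 1)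
    (lam gam : Fin d → ℝ) (x y : Fin d → (Fin d → ℂ))
    (hx : ∀ i k, star (x i) ⬝ᵥ x k = if i = k then 1 else 0)
    (hy : ∀ i k, star (y i) ⬝ᵥ y k = if i = k then 1 else 0)
    (hρdec : ρ = ∑ i, (lam i : ℂ) • Matrix.vecMulVec (x i) (star (x i)))
    (hσdec : σ = ∑ j, (gam j : ℂ) • Matrix.vecMulVec (y j) (star (y j))) :
    (∀ v : Fin d → ℂ, σ *ᵥ v = 0 → ρ *ᵥ v = 0) ↔
      (∀ i j, nsDist gam y x j i = 0 → nsDist lam x y i j = 0) := by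
  -- conjugate symmetry of the inner products
  have hconj : ∀ i j, star (y j) ⬝ᵥ x i = star ((star (x i) ⬝ᵥ y j)) := by
    intro i j
    simp only [dotProduct, star_sum, star_mul', Pi.star_apply, star_star]
    exact Finset.sum_congr rfl fun k _ => by ring
  -- completeness of the orthonormal family y : v = ∑ j ⟨y j, v⟩ y j
  have hY : ∀ v : Fin d → ℂ, v = ∑ j, (star (y j) ⬝ᵥ v) • y j := by
    intro v
    set Y : Matrix (Fin d) (Fin d) ℂ := Matrix.of (fun j => star (y j)) with hYdef
    have h1 : Y * Yᴴ = 1 := by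
      ext i k
      have := hy i k
      simp only [dotProduct, Pi.star_apply] at this
      simp only [Matrix.mul_apply, Matrix.conjTranspose_apply, Matrix.one_apply, hYdef,
        Matrix.of_apply, Pi.star_apply, star_star]
      exact this
    have h2 : Yᴴ * Y = 1 := mul_eq_one_comm.mp h1
    calc v = (Yᴴ * Y) *ᵥ v := by rw [h2, Matrix.one_mulVec]
      _ = Yᴴ *ᵥ (Y *ᵥ v) := by rw [Matrix.mulVec_mulVec]
      _ = ∑ j, (star (y j) ⬝ᵥ v) • y j := by
          funext k
          rw [Finset.sum_apply]
          simp only [Matrix.mulVec, dotProduct, Matrix.conjTranspose_apply, hYdef,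
            Matrix.of_apply, Pi.star_apply, star_star, Pi.smul_apply, smul_eq_mul,
            Finset.sum_mul]
          exact Finset.sum_congr rfl fun j _ => by rw [Finset.mul_sum]; exact Finset.sum_congr rfl fun m _ => by ring
  have hkρ := ker_iff ρ lam x hx hρdec
  have hkσ := ker_iff σ gam y hy hσdec
  constructor
  · -- supp inclusion → distribution support inclusion
    intro h i j hq
    unfold nsDist at hq ⊢
    rcases mul_eq_zero.mp hq with hg | hc
    · -- gam j = 0 : y j is in ker σ
      have hyj : σ *ᵥ y j = 0 := by
        rw [hkσ]
        intro k
        rw [hy k j]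
        by_cases hkj : k = j
        · subst hkj; simp [hg]
        · simp [hkj]
      have hz := (hkρ (y j)).mp (h _ hyj) i
      rcases mul_eq_zero.mp hz with h1 | h2
      · exact mul_eq_zero.mpr (Or.inl (by exact_mod_cast h1))
      · rw [h2]; simp
    · -- inner product vanishes
      have hc0 : star (y j) ⬝ᵥ x i = 0 := by rwa [Complex.normSq_eq_zero] at hc
      rw [hconj i j] at hc0
      rw [star_eq_zero.mp hc0]
      simp
  · -- distribution support inclusion → supp inclusion
    intro h v hv
    rw [hkρ]
    intro i
    by_cases hli : lam i = 0
    · simp [hli]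
    have hσv := (hkσ v).mp hv
    -- expand v in the y basis
    have hxv : star (x i) ⬝ᵥ v = ∑ j, (star (y j) ⬝ᵥ v) * (star (x i) ⬝ᵥ y j) := by
      conv_lhs => rw [hY v]
      rw [dot_sum_smul]
    rw [hxv, Finset.mul_sum]
    refine Finset.sum_eq_zero fun j _ => ?_
    by_cases hgj : gam j = 0
    · -- use the hypothesis h at (i, j)
      have hq : nsDist gam y x j i = 0 := by unfold nsDist; simp [hgj]
      have hp := h i j hq
      unfold nsDist at hp
      rcases mul_eq_zero.mp hp with h1 | h2
      · exact absurd h1 hli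
      · rw [Complex.normSq_eq_zero] at h2
        rw [h2]; ring
    · -- gam j ≠ 0 : ⟨y j, v⟩ = 0
      have hz := hσv j
      have hyv : star (y j) ⬝ᵥ v = 0 := by
        rcases mul_eq_zero.mp hz with h1 | h2
        · exact absurd (by exact_mod_cast h1) hgj
        · exact h2
      rw [hyv]; ring

end
end

section
/- (Nagaoka's converse bound, classical form) Let p and q be probability distributions on a finite set Ω. Then for every function T : Ω → [0,1] and every δ ≥ 0, Σ_ω (1 - T(ω)) p(ω) + δ Σ_ω T(ω) q(ω) ≥ (1/2)(Σ_{ω : p(ω) ≤ δ q(ω)} p(ω) + δ Σ_{ω : p(ω) > δ q(ω)} q(ω)). -/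
open scoped BigOperators

/-- Nagaoka's converse bound (classical form): for probability distributions `p, q` on a
finite set `Ω`, any randomized test `T : Ω → [0,1]`, and any `δ ≥ 0`,
`Σ (1-T)p + δ Σ T q ≥ (1/2)(Σ_{p ≤ δq} p + δ Σ_{p > δq} q)`. -/
theorem nagaoka_converse {Ω : Type*} [Fintype Ω] (p q T : Ω → ℝ)
    (hp0 : ∀ ω, 0 ≤ p ω) (hp1 : ∑ ω, p ω = 1)
    (hq0 : ∀ ω, 0 ≤ q ω) (hq1 : ∑ ω, q ω = 1)
    (hT : ∀ ω, T ω ∈ Set.Icc (0 : ℝ) 1) (δ : ℝ) (hδ : 0 ≤ δ) :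
    (1 / 2) * ((∑ ω ∈ Finset.univ.filter (fun ω => p ω ≤ δ * q ω), p ω) +
        δ * ∑ ω ∈ Finset.univ.filter (fun ω => δ * q ω < p ω), q ω) ≤
      (∑ ω, (1 - T ω) * p ω) + δ * ∑ ω, T ω * q ω := by
  have hmin0 : ∀ ω, 0 ≤ min (p ω) (δ * q ω) := fun ω =>
    le_min (hp0 ω) (mul_nonneg hδ (hq0 ω))
  have hS : (∑ ω ∈ Finset.univ.filter (fun ω => p ω ≤ δ * q ω), p ω) +
      δ * ∑ ω ∈ Finset.univ.filter (fun ω => δ * q ω < p ω), q ω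
      = ∑ ω, min (p ω) (δ * q ω) := by
    rw [Finset.mul_sum, Finset.sum_filter, Finset.sum_filter, ← Finset.sum_add_distrib]
    refine Finset.sum_congr rfl fun ω _ => ?_
    rcases le_or_gt (p ω) (δ * q ω) with h | h
    · simp [h, not_lt.mpr h, min_eq_left h]
    · simp [h, not_le.mpr h, min_eq_right h.le]
  have hstep : ∑ ω, min (p ω) (δ * q ω) ≤
      (∑ ω, (1 - T ω) * p ω) + δ * ∑ ω, T ω * q ω := by
    rw [Finset.mul_sum, ← Finset.sum_add_distrib]
    refine Finset.sum_le_sum fun ω _ => ?_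
    obtain ⟨h0, h1⟩ := hT ω
    have a : min (p ω) (δ * q ω) ≤ p ω := min_le_left _ _
    have b : min (p ω) (δ * q ω) ≤ δ * q ω := min_le_right _ _
    nlinarith [mul_nonneg h0 (sub_nonneg.mpr b), mul_nonneg (sub_nonneg.mpr h1) (sub_nonneg.mpr a)]
  have hSnn : 0 ≤ ∑ ω, min (p ω) (δ * q ω) := Finset.sum_nonneg fun ω _ => hmin0 ω
  linarith [hS, hstep, hSnn]
end

section
/- (One-shot converse Hoeffding bound, classical core estimate) Let p, q be probability distributions on a finite set Ω with common support, let r ≥ 0 and φ(r) := sup_{α∈(0,1]} ((1-α)/α)(D_α(p‖q) - r), and suppose there exists t ∈ [0,1] such that the tilted distribution q̂_t(ω) = p(ω)^{1-t} q(ω)^t / Σ_ω p(ω)^{1-t} q(ω)^t satisfies D(q̂_t‖p) = φ(r) and D(q̂_t‖q) = r. Then for every ν > 0 and every test T : Ω → [0,1] with Σ_ω T(ω) q(ω) ≤ (1/4)e^{-(r+ν)}, the type-I error satisfies Σ_ω (1 - T(ω)) p(ω) ≥ (1/2)(1/2 - K/ν²) e^{-ν - φ(r)}, where K := V(q̂_t‖q)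 + V(q̂_t‖p). -/
open scoped BigOperators

noncomputable section

variable {Ω : Type*} [Fintype Ω]

/-- Classical Rényi divergence `D_α(p‖q) = (1/(α-1)) log Σ p^α q^{1-α}`. -/
def renyiD (p q : Ω → ℝ) (α : ℝ) : ℝ :=
  (1 / (α - 1)) * Real.log (∑ ω, p ω ^ α * q ω ^ (1 - α))

/-- Classical relative entropy `D(μ‖p) = Σ μ log(μ/p)`. -/
def relEnt (μ p : Ω → ℝ) : ℝ := ∑ ω, μ ω * Real.log (μ ω / p ω)

/-- Relative variance `V(μ‖p) = Σ μ (log(μ/p))² - D(μ‖p)²`. -/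
def relVar (μ p : Ω → ℝ) : ℝ :=
  (∑ ω, μ ω * (Real.log (μ ω / p ω)) ^ 2) - (relEnt μ p) ^ 2

/-- The Hoeffding error-exponent function
`φ(r) = sup_{α ∈ (0,1]} ((1-α)/α)(D_α(p‖q) - r)`. -/
def hoeffdingExp (p q : Ω → ℝ) (r : ℝ) : ℝ :=
  ⨆ α : Set.Ioc (0 : ℝ) 1, ((1 - (α : ℝ)) / (α : ℝ)) * (renyiD p q α - r)

/-- One-shot converse Hoeffding bound (classical core estimate). -/
theorem one_shot_converse_hoeffding (p q : Ω → ℝ)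
    (hp0 : ∀ ω, 0 ≤ p ω) (hp1 : ∑ ω, p ω = 1)
    (hq0 : ∀ ω, 0 ≤ q ω) (hq1 : ∑ ω, q ω = 1)
    (hsupp : ∀ ω, 0 < p ω ↔ 0 < q ω)
    (r : ℝ) (hr : 0 ≤ r) (t : ℝ) (ht : t ∈ Set.Icc (0 : ℝ) 1)
    (qhat : Ω → ℝ)
    (hqhat : ∀ ω, qhat ω = p ω ^ (1 - t) * q ω ^ t / ∑ ω', p ω' ^ (1 - t) * q ω' ^ t)
    (hD0 : relEnt qhat p = hoeffdingExp p q r)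
    (hD1 : relEnt qhat q = r)
    (ν : ℝ) (hν : 0 < ν)
    (T : Ω → ℝ) (hT : ∀ ω, T ω ∈ Set.Icc (0 : ℝ) 1)
    (hβ : ∑ ω, T ω * q ω ≤ (1 / 4) * Real.exp (-(r + ν))) :
    (1 / 2) * (1 / 2 - (relVar qhat q + relVar qhat p) / ν ^ 2) *
        Real.exp (-ν - hoeffdingExp p q r) ≤
      ∑ ω, (1 - T ω) * p ω := by
  classical
  set φ : ℝ := hoeffdingExp p q r with hφ
  set K : ℝ := relVar qhat q + relVar qhat p with hK
  -- basic positivity facts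
  have hν2 : (0:ℝ) < ν ^ 2 := by positivity
  have hqhat0 : ∀ ω, 0 ≤ qhat ω := by
    intro ω
    rw [hqhat ω]
    apply div_nonneg
    · exact mul_nonneg (Real.rpow_nonneg (hp0 ω) _) (Real.rpow_nonneg (hq0 ω) _)
    · exact Finset.sum_nonneg fun ω' _ =>
        mul_nonneg (Real.rpow_nonneg (hp0 ω') _) (Real.rpow_nonneg (hq0 ω') _)
  have hZpos : 0 < ∑ ω', p ω' ^ (1 - t) * q ω' ^ t := by
    obtain ⟨ω₀, -, hω₀⟩ : ∃ ω₀ ∈ Finset.univ, 0 < p ω₀ := by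
      by_contra h
      push_neg at h
      have : ∀ ω, p ω = 0 := fun ω => le_antisymm (h ω (Finset.mem_univ ω)) (hp0 ω)
      simp [this] at hp1
    refine Finset.sum_pos' (fun ω' _ => mul_nonneg (Real.rpow_nonneg (hp0 ω') _)
      (Real.rpow_nonneg (hq0 ω') _)) ⟨ω₀, Finset.mem_univ ω₀, ?_⟩
    exact mul_pos (Real.rpow_pos_of_pos hω₀ _) (Real.rpow_pos_of_pos ((hsupp ω₀).1 hω₀) _)
  have hqhatsum : ∑ ω, qhat ω = 1 := by
    have h' : ∑ ω, qhat ω = ∑ ω, p ω ^ (1 - t) * q ω ^ t / ∑ ω', p ω' ^ (1 - t) * q ω' ^ t :=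
      Finset.sum_congr rfl fun ω _ => hqhat ω
    rw [h', ← Finset.sum_div, div_self (ne_of_gt hZpos)]
  have hqhatpos : ∀ ω, 0 < qhat ω → 0 < p ω ∧ 0 < q ω := by
    intro ω hω
    by_contra h
    have hp : p ω = 0 := by
      rcases (hp0 ω).lt_or_eq with h1 | h1
      · exact absurd ⟨h1, (hsupp ω).1 h1⟩ h
      · exact h1.symm
    have hq : q ω = 0 := by
      rcases (hq0 ω).lt_or_eq with h1 | h1
      · exact absurd ((hsupp ω).2 h1) (by rw [hp]; exact lt_irrefl 0)
      · exact h1.symm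
    have : qhat ω = 0 := by
      rw [hqhat ω, hp, hq]
      rcases eq_or_lt_of_le ht.1 with h1 | h1
      · rw [Real.zero_rpow (by rw [← h1]; norm_num : (1:ℝ) - t ≠ 0), zero_mul, zero_div]
      · rw [Real.zero_rpow (ne_of_gt h1), mul_zero, zero_div]
    rw [this] at hω; exact lt_irrefl 0 hω
  -- the good set
  set A : Finset Ω := Finset.univ.filter
    (fun ω => qhat ω ≤ Real.exp (r + ν) * q ω ∧ qhat ω ≤ Real.exp (φ + ν) * p ω) with hA
  -- Chebyshev bound on the complement
  have cheb : ∑ ω ∈ Finset.univ.filter (fun ω => ¬(qhat ω ≤ Real.exp (r + ν) * q ω ∧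
      qhat ω ≤ Real.exp (φ + ν) * p ω)), qhat ω ≤ K / ν ^ 2 := by
    have hterm : ∀ ω ∈ Finset.univ.filter (fun ω => ¬(qhat ω ≤ Real.exp (r + ν) * q ω ∧
        qhat ω ≤ Real.exp (φ + ν) * p ω)),
        qhat ω ≤ qhat ω * ((Real.log (qhat ω / q ω) - r) ^ 2
          + (Real.log (qhat ω / p ω) - φ) ^ 2) / ν ^ 2 := by
      intro ω hω
      rw [Finset.mem_filter] at hω
      rcases (hqhat0 ω).lt_or_eq with hpos | hzero
      · obtain ⟨hp', hq'⟩ := hqhatpos ω hpos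
        have key : ν ^ 2 ≤ (Real.log (qhat ω / q ω) - r) ^ 2
            + (Real.log (qhat ω / p ω) - φ) ^ 2 := by
          rcases not_and_or.1 hω.2 with h | h
          · push_neg at h
            have hlog : r + ν < Real.log (qhat ω / q ω) := by
              have h2 : Real.exp (r + ν) < qhat ω / q ω := by
                rw [lt_div_iff₀ hq']; linarith [h]
              calc r + ν = Real.log (Real.exp (r + ν)) := (Real.log_exp _).symm
                _ < Real.log (qhat ω / q ω) :=
                    Real.log_lt_log (Real.exp_pos _) h2
            nlinarith [sq_nonneg (Real.log (qhat ω / p ω) - φ),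
              sq_nonneg (Real.log (qhat ω / q ω) - r - ν)]
          · push_neg at h
            have hlog : φ + ν < Real.log (qhat ω / p ω) := by
              have h2 : Real.exp (φ + ν) < qhat ω / p ω := by
                rw [lt_div_iff₀ hp']; linarith [h]
              calc φ + ν = Real.log (Real.exp (φ + ν)) := (Real.log_exp _).symm
                _ < Real.log (qhat ω / p ω) :=
                    Real.log_lt_log (Real.exp_pos _) h2
            nlinarith [sq_nonneg (Real.log (qhat ω / q ω) - r),
              sq_nonneg (Real.log (qhat ω / p ω) - φ - ν)]
        rw [le_div_iff₀ hν2]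
        calc qhat ω * ν ^ 2 ≤ qhat ω * ((Real.log (qhat ω / q ω) - r) ^ 2
              + (Real.log (qhat ω / p ω) - φ) ^ 2) :=
            mul_le_mul_of_nonneg_left key (hqhat0 ω)
          _ = _ := rfl
      · rw [← hzero, zero_mul, zero_div]
    calc ∑ ω ∈ Finset.univ.filter (fun ω => ¬(qhat ω ≤ Real.exp (r + ν) * q ω ∧
          qhat ω ≤ Real.exp (φ + ν) * p ω)), qhat ω
        ≤ ∑ ω ∈ Finset.univ.filter (fun ω => ¬(qhat ω ≤ Real.exp (r + ν) * q ω ∧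
          qhat ω ≤ Real.exp (φ + ν) * p ω)), qhat ω * ((Real.log (qhat ω / q ω) - r) ^ 2
          + (Real.log (qhat ω / p ω) - φ) ^ 2) / ν ^ 2 := Finset.sum_le_sum hterm
      _ ≤ ∑ ω, qhat ω * ((Real.log (qhat ω / q ω) - r) ^ 2
          + (Real.log (qhat ω / p ω) - φ) ^ 2) / ν ^ 2 := by
          apply Finset.sum_le_sum_of_subset_of_nonneg (Finset.filter_subset _ _)
          intro ω _ _
          apply div_nonneg _ (le_of_lt hν2)
          exact mul_nonneg (hqhat0 ω) (by positivity)
      _ = K / ν ^ 2 := by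
          rw [← Finset.sum_div]
          congr 1
          have expand : ∀ ω, qhat ω * ((Real.log (qhat ω / q ω) - r) ^ 2
              + (Real.log (qhat ω / p ω) - φ) ^ 2)
              = qhat ω * (Real.log (qhat ω / q ω)) ^ 2
                + qhat ω * (Real.log (qhat ω / p ω)) ^ 2
                - 2 * r * (qhat ω * Real.log (qhat ω / q ω))
                - 2 * φ * (qhat ω * Real.log (qhat ω / p ω))
                + (r ^ 2 + φ ^ 2) * qhat ω := by
            intro ω; ring
          rw [Finset.sum_congr rfl fun ω _ => expand ω]
          rw [Finset.sum_add_distrib, Finset.sum_sub_distrib, Finset.sum_sub_distrib,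
            Finset.sum_add_distrib, ← Finset.mul_sum, ← Finset.mul_sum, ← Finset.mul_sum]
          have e1 : ∑ ω, qhat ω * Real.log (qhat ω / q ω) = r := hD1
          have e2 : ∑ ω, qhat ω * Real.log (qhat ω / p ω) = φ := hD0
          have e3 : ∑ ω, qhat ω * (Real.log (qhat ω / q ω)) ^ 2 = relVar qhat q + r ^ 2 := by
            rw [relVar, hD1]; ring
          have e4 : ∑ ω, qhat ω * (Real.log (qhat ω / p ω)) ^ 2 = relVar qhat p + φ ^ 2 := by
            rw [relVar, hD0]; ring
          rw [e1, e2, e3, e4, hqhatsum, hK]; ring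
  -- qhat mass of A
  have hAmass : 1 - K / ν ^ 2 ≤ ∑ ω ∈ A, qhat ω := by
    have := Finset.sum_filter_add_sum_filter_not Finset.univ
      (fun ω => qhat ω ≤ Real.exp (r + ν) * q ω ∧ qhat ω ≤ Real.exp (φ + ν) * p ω) qhat
    rw [hqhatsum] at this
    have : ∑ ω ∈ A, qhat ω = 1 - ∑ ω ∈ Finset.univ.filter
        (fun ω => ¬(qhat ω ≤ Real.exp (r + ν) * q ω ∧
        qhat ω ≤ Real.exp (φ + ν) * p ω)), qhat ω := by
      rw [hA]; linarith [this]
    rw [this]; linarith [cheb]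
  -- test mass on A under qhat
  have hTmass : ∑ ω ∈ A, T ω * qhat ω ≤ 1 / 4 := by
    have step1 : ∑ ω ∈ A, T ω * qhat ω ≤ ∑ ω ∈ A, Real.exp (r + ν) * (T ω * q ω) := by
      apply Finset.sum_le_sum
      intro ω hω
      rw [hA, Finset.mem_filter] at hω
      calc T ω * qhat ω ≤ T ω * (Real.exp (r + ν) * q ω) :=
            mul_le_mul_of_nonneg_left hω.2.1 (hT ω).1
        _ = Real.exp (r + ν) * (T ω * q ω) := by ring
    have step2 : ∑ ω ∈ A, Real.exp (r + ν) * (T ω * q ω)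
        ≤ Real.exp (r + ν) * ((1 / 4) * Real.exp (-(r + ν))) := by
      rw [← Finset.mul_sum]
      apply mul_le_mul_of_nonneg_left _ (le_of_lt (Real.exp_pos _))
      calc ∑ ω ∈ A, T ω * q ω ≤ ∑ ω, T ω * q ω := by
            apply Finset.sum_le_sum_of_subset_of_nonneg (Finset.subset_univ _)
            intro ω _ _
            exact mul_nonneg (hT ω).1 (hq0 ω)
        _ ≤ (1 / 4) * Real.exp (-(r + ν)) := hβ
    have : Real.exp (r + ν) * ((1 / 4) * Real.exp (-(r + ν))) = 1 / 4 := by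
      rw [show Real.exp (r + ν) * ((1 / 4) * Real.exp (-(r + ν)))
          = (1 / 4) * (Real.exp (r + ν) * Real.exp (-(r + ν))) from by ring,
        ← Real.exp_add, show r + ν + -(r + ν) = 0 from by ring, Real.exp_zero]
      norm_num
    linarith [step1, step2]
  -- mass of (1-T) qhat on A
  have hmain : 3 / 4 - K / ν ^ 2 ≤ ∑ ω ∈ A, (1 - T ω) * qhat ω := by
    have : ∑ ω ∈ A, (1 - T ω) * qhat ω = ∑ ω ∈ A, qhat ω - ∑ ω ∈ A, T ω * qhat ω := by
      rw [← Finset.sum_sub_distrib]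
      exact Finset.sum_congr rfl fun ω _ => by ring
    rw [this]; linarith [hAmass, hTmass]
  -- lift to p
  have hlift : Real.exp (-(φ + ν)) * ∑ ω ∈ A, (1 - T ω) * qhat ω ≤ ∑ ω, (1 - T ω) * p ω := by
    calc Real.exp (-(φ + ν)) * ∑ ω ∈ A, (1 - T ω) * qhat ω
        = ∑ ω ∈ A, (1 - T ω) * (Real.exp (-(φ + ν)) * qhat ω) := by
          rw [Finset.mul_sum]
          exact Finset.sum_congr rfl fun ω _ => by ring
      _ ≤ ∑ ω ∈ A, (1 - T ω) * p ω := by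
          apply Finset.sum_le_sum
          intro ω hω
          rw [hA, Finset.mem_filter] at hω
          apply mul_le_mul_of_nonneg_left _ (by linarith [(hT ω).2])
          rw [Real.exp_neg]
          rw [inv_mul_le_iff₀ (Real.exp_pos _)]
          linarith [hω.2.2]
      _ ≤ ∑ ω, (1 - T ω) * p ω := by
          apply Finset.sum_le_sum_of_subset_of_nonneg (Finset.subset_univ _)
          intro ω _ _
          exact mul_nonneg (by linarith [(hT ω).2]) (hp0 ω)
  -- conclude
  have hsum_nonneg : 0 ≤ ∑ ω, (1 - T ω) * p ω :=
    Finset.sum_nonneg fun ω _ => mul_nonneg (by linarith [(hT ω).2]) (hp0 ω)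
  have hexp_eq : Real.exp (-ν - φ) = Real.exp (-(φ + ν)) := by
    rw [show -ν - φ = -(φ + ν) from by ring]
  by_cases hcase : 1 / 2 - K / ν ^ 2 ≤ 0
  · have hb : (1 / 2) * (1 / 2 - K / ν ^ 2) * Real.exp (-ν - φ) ≤ 0 :=
      mul_nonpos_of_nonpos_of_nonneg (by linarith) (le_of_lt (Real.exp_pos _))
    exact hb.trans hsum_nonneg
  · push_neg at hcase
    have h1 : (1 / 2) * (1 / 2 - K / ν ^ 2) ≤ 3 / 4 - K / ν ^ 2 := by linarith
    calc (1 / 2) * (1 / 2 - K / ν ^ 2) * Real.exp (-ν - φ)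
        ≤ (3 / 4 - K / ν ^ 2) * Real.exp (-ν - φ) :=
          mul_le_mul_of_nonneg_right h1 (le_of_lt (Real.exp_pos _))
      _ ≤ (∑ ω ∈ A, (1 - T ω) * qhat ω) * Real.exp (-ν - φ) :=
          mul_le_mul_of_nonneg_right hmain (le_of_lt (Real.exp_pos _))
      _ = Real.exp (-(φ + ν)) * ∑ ω ∈ A, (1 - T ω) * qhat ω := by
          rw [← hexp_eq]; ring
      _ ≤ ∑ ω, (1 - T ω) * p ω := hlift

end
end

section
/- (Sphere-packing reduction to hypothesis testing / meta-converse) For any classical-quantum channel W : X → S(H) and any code C_n of blocklength n with M messages, the maximal error probability satisfies ε_max(C_n) ≥ max_{σ∈S(H)} min_{x^n ∈ C_n} α̂_{1/M}(W_{x^n}^{⊗n} ‖ σ^{⊗n}), where α̂_μ(ρ‖σ) := min{ Tr[(1-Q)ρ] : 0 ≤ Q ≤ 1, Tr[Qσ] ≤ μ }. -/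
open Matrix
open scoped BigOperators ComplexOrder

noncomputable section

variable {n : Type*} [Fintype n] [DecidableEq n]

/-- Density matrices: positive semidefinite with unit trace. -/
def IsDensity (A : Matrix n n ℂ) : Prop := A.PosSemidef ∧ A.trace = 1

/-- Minimum type-I error of a quantum hypothesis test between `ρ` and `σ` under a
type-II error constraint `μ`: `α̂_μ(ρ‖σ) = min { Tr[(1-Q)ρ] : 0 ≤ Q ≤ 1, Tr[Qσ] ≤ μ }`. -/
def hatAlpha (μ : ℝ) (ρ σ : Matrix n n ℂ) : ℝ :=
  sInf { e | ∃ Q : Matrix n n ℂ, Q.PosSemidef ∧ (1 - Q).PosSemidef ∧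
      ((Q * σ).trace).re ≤ μ ∧ e = (((1 - Q) * ρ).trace).re }

/-- The `m`-fold product state `W_{x_1} ⊗ ⋯ ⊗ W_{x_m}` on `(ℂ^d)^{⊗m}`. -/
def prodState {d m : ℕ} {X : Type*} (W : X → Matrix (Fin d) (Fin d) ℂ) (xs : Fin m → X) :
    Matrix (Fin m → Fin d) (Fin m → Fin d) ℂ :=
  Matrix.of fun i j => ∏ k, W (xs k) (i k) (j k)

/-- The `m`-fold tensor power `σ^{⊗m}`. -/
def nFold {d : ℕ} (m : ℕ) (σ : Matrix (Fin d) (Fin d) ℂ) :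
    Matrix (Fin m → Fin d) (Fin m → Fin d) ℂ :=
  Matrix.of fun i j => ∏ k, σ (i k) (j k)

/-!
Fix a state `σ`. The POVM elements sum to `1` and `Tr σ^{⊗n} = 1`, so some message `m` has
`Tr[Π_m σ^{⊗n}] ≤ 1/M`. Then `Π_m` is an admissible test of `W_{x^n(m)}^{⊗n}` against `σ^{⊗n}` at
level `1/M`, whence `α̂_{1/M}(W_{x^n(m)}^{⊗n} ‖ σ^{⊗n}) ≤ 1 - Tr[Π_m W_{x^n(m)}^{⊗n}] ≤ ε_max`.
-/

namespace Matrix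

variable {𝕜 : Type*} [RCLike 𝕜] {ι : Type*}

theorem PosSemidef.trace_mul_nonneg [Fintype ι] {A B : Matrix ι ι 𝕜} (hA : A.PosSemidef)
    (hB : B.PosSemidef) : 0 ≤ (A * B).trace := by
  -- `Tr[AB] = 𝟙ᴴ (A ⊙ Bᵀ) 𝟙`, and `A ⊙ Bᵀ` is positive by the Schur product theorem.
  convert (hA.hadamard hB.transpose).dotProduct_mulVec_nonneg (fun _ => 1) using 1
  simp [trace, mul_apply, dotProduct, mulVec]

theorem PosSemidef.one_sub_of_sum_eq_one [DecidableEq ι] {κ : Type*} [Fintype κ]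
    {P : κ → Matrix ι ι 𝕜} (hP : ∀ k, (P k).PosSemidef) (hsum : ∑ k, P k = 1) (k : κ) :
    (1 - P k).PosSemidef := by
  classical
  rw [← hsum, ← Finset.sum_erase_add _ _ (Finset.mem_univ k), add_sub_cancel_right]
  exact posSemidef_sum _ fun j _ => hP j

theorem exists_re_trace_mul_le_inv_card [Fintype ι] [DecidableEq ι] {κ : Type*} [Fintype κ]
    [Nonempty κ] {P : κ → Matrix ι ι 𝕜} (hsum : ∑ k, P k = 1) {σ : Matrix ι ι 𝕜}
    (hσ : σ.trace = 1) : ∃ k, RCLike.re (P k * σ).trace ≤ 1 / Fintype.card κ := by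
  have hcard : (Fintype.card κ : ℝ) ≠ 0 := Nat.cast_ne_zero.mpr Fintype.card_ne_zero
  obtain ⟨k, -, hk⟩ := Finset.exists_le_of_sum_le Finset.univ_nonempty
    (f := fun k => RCLike.re (P k * σ).trace) (g := fun _ => 1 / (Fintype.card κ : ℝ)) <| by
      rw [← map_sum, ← trace_sum, ← Finset.sum_mul, hsum, Matrix.one_mul, hσ, Finset.sum_const,
        Finset.card_univ, nsmul_eq_mul, mul_one_div_cancel hcard, RCLike.one_re]
  exact ⟨k, hk⟩

variable [Fintype ι] [DecidableEq ι] {κ : Type*}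

def piTensor {R : Type*} [CommSemiring R] (A : ι → Matrix κ κ R) : Matrix (ι → κ) (ι → κ) R :=
  of fun i j => ∏ k, A k (i k) (j k)

theorem trace_piTensor [Fintype κ] {R : Type*} [CommSemiring R] (A : ι → Matrix κ κ R) :
    (piTensor A).trace = ∏ k, (A k).trace := by
  simp only [trace, diag, piTensor, of_apply]
  rw [Finset.prod_univ_sum, Fintype.piFinset_univ]

-- `piTensor A` is the Hadamard product of the factors `A k` pulled back along the coordinate
-- projections `i ↦ i k`, so the Schur product theorem applies factor by factor.
theorem PosSemidef.piTensor {A : ι → Matrix κ κ 𝕜} (hA : ∀ k, (A k).PosSemidef) :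
    (piTensor A).PosSemidef := by
  suffices ∀ s : Finset ι, (of fun i j : ι → κ => ∏ k ∈ s, A k (i k) (j k)).PosSemidef from
    this Finset.univ
  intro s
  induction s using Finset.induction_on with
  | empty =>
    convert (PosSemidef.one (n := Unit) (R := 𝕜)).submatrix fun _ : ι → κ => () using 1
    ext i j
    simp
  | insert a s ha ih =>
    convert ((hA a).submatrix fun i : ι → κ => i a).hadamard ih using 1
    ext i j
    simp [Finset.prod_insert ha]

end Matrix

section Density

variable {ι : Type*} [Fintype ι] [DecidableEq ι]

theorem IsDensity.re_trace_one_sub_mul {ρ : Matrix ι ι ℂ} (hρ : IsDensity ρ) (Q : Matrix ι ι ℂ) :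
    (((1 - Q) * ρ).trace).re = 1 - ((Q * ρ).trace).re := by
  rw [Matrix.sub_mul, Matrix.one_mul, trace_sub, hρ.2, Complex.sub_re, Complex.one_re]

theorem IsDensity.piTensor {κ : Type*} [Fintype κ] [DecidableEq κ] {A : ι → Matrix κ κ ℂ}
    (hA : ∀ k, IsDensity (A k)) : IsDensity (piTensor A) :=
  ⟨PosSemidef.piTensor fun k => (hA k).1, by simp [trace_piTensor, fun k => (hA k).2]⟩

theorem hatAlpha_le {μ : ℝ} {ρ σ Q : Matrix ι ι ℂ} (hρ : ρ.PosSemidef) (hQ : Q.PosSemidef)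
    (hQ' : (1 - Q).PosSemidef) (hQσ : ((Q * σ).trace).re ≤ μ) :
    hatAlpha μ ρ σ ≤ (((1 - Q) * ρ).trace).re := by
  refine csInf_le ⟨0, ?_⟩ ⟨Q, hQ, hQ', hQσ, rfl⟩
  rintro _ ⟨Q, -, hQ', -, rfl⟩
  exact (Complex.nonneg_iff.mp (hQ'.trace_mul_nonneg hρ)).1

end Density

/-- Meta-converse / sphere-packing reduction to binary hypothesis testing: the maximal
error probability of any code is lower bounded by
`max_σ min_{codewords} α̂_{1/M}(W_{x^n}^{⊗n} ‖ σ^{⊗n})`. -/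
theorem meta_converse {d nb M : ℕ} {X : Type*} [Fintype X] (hM : 0 < M)
    (W : X → Matrix (Fin d) (Fin d) ℂ) (hW : ∀ x, IsDensity (W x))
    (c : Fin M → (Fin nb → X))
    (Pov : Fin M → Matrix (Fin nb → Fin d) (Fin nb → Fin d) ℂ)
    (hPovPos : ∀ m, (Pov m).PosSemidef) (hPovSum : ∑ m, Pov m = 1) :
    (⨆ σ : {σ : Matrix (Fin d) (Fin d) ℂ // IsDensity σ},
        ⨅ m : Fin M, hatAlpha (1 / (M : ℝ)) (prodState W (c m)) (nFold nb σ.1)) ≤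
      ⨆ m : Fin M, (1 - ((Pov m * prodState W (c m)).trace).re) := by
  have hρ (m : Fin M) : IsDensity (prodState W (c m)) := IsDensity.piTensor fun k => hW (c m k)
  have hPov' : ∀ m, (1 - Pov m).PosSemidef := PosSemidef.one_sub_of_sum_eq_one hPovPos hPovSum
  refine Real.iSup_le (fun σ => ?_) (Real.iSup_nonneg fun m => ?_)
  · have : Nonempty (Fin M) := ⟨⟨0, hM⟩⟩
    obtain ⟨m, hm⟩ := exists_re_trace_mul_le_inv_card (σ := nFold nb σ.1) hPovSum
      (IsDensity.piTensor fun _ => σ.2).2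
    calc ⨅ m, hatAlpha (1 / (M : ℝ)) (prodState W (c m)) (nFold nb σ.1)
        ≤ hatAlpha (1 / (M : ℝ)) (prodState W (c m)) (nFold nb σ.1) :=
          ciInf_le (Finite.bddBelow_range _) m
      _ ≤ 1 - ((Pov m * prodState W (c m)).trace).re := by
          rw [← (hρ m).re_trace_one_sub_mul]
          exact hatAlpha_le (hρ m).1 (hPovPos m) (hPov' m) (by simpa using hm)
      _ ≤ _ := le_ciSup (f := fun m => 1 - ((Pov m * prodState W (c m)).trace).re)
          (Finite.bddAbove_range _) m
  · rw [← (hρ m).re_trace_one_sub_mul]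
    exact (Complex.nonneg_iff.mp ((hPov' m).trace_mul_nonneg (hρ m).1)).1

end
end

section
/- (Properties of the Legendre–Fenchel transform of the tilted cumulant, part b) Let p, q be probability distributions on a finite set with equal support, Λ_0(t) := log Σ_ω p(ω)^{1-t} q(ω)^t, Λ_0*(z) := sup_{t∈ℝ} {tz - Λ_0(t)}, and φ(r) := sup_{s≥0} { -(1+s)Λ_0(s/(1+s)) - sr }. Assume r > -log Σ_{ω : p(ω)>0} q(ω) and φ(r) > 0. Then Λ_0*(φ(r) - r) = φ(r). -/
/-!
Write `g(t) = t (φ - r) - Λ₀(t)` for the objective of `Λ₀*(φ - r)`. Substituting `t = s/(1+s)`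
shows that on `[0, 1)` the value `g(t)` is a convex combination of `φ` and the Hoeffding
objective at `s`; hence `g ≤ φ` on `[0, 1)` and `sup_{[0,1)} g ≥ φ`. As `g(0) = 0 < φ` and
`g(1) = φ - r < φ`, the maximum of `g` over `[0, 1]` equals `φ` and is attained in the interior.
By Hölder's inequality `Λ₀` is convex, so `g` is concave and this local maximum is global.
-/

open scoped BigOperators

noncomputable section

variable {Ω : Type*} [Fintype Ω]

/-- The tilted cumulant generating function `Λ₀(t) = log Σ p^{1-t} q^t`. -/
def cgf0 (p q : Ω → ℝ) (t : ℝ) : ℝ := Real.log (∑ ω, p ω ^ (1 - t) * q ω ^ t)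

/-- Legendre–Fenchel transform of `Λ₀`. -/
def cgf0LF (p q : Ω → ℝ) (z : ℝ) : ℝ := ⨆ t : ℝ, (t * z - cgf0 p q t)

/-- The Hoeffding exponent as a Legendre transform of
`s ↦ -(1+s)Λ₀(s/(1+s)) = s D_{1/(1+s)}(p‖q)`. -/
def hoeffdingLF (p q : Ω → ℝ) (r : ℝ) : ℝ :=
  ⨆ s : Set.Ici (0 : ℝ), (-(1 + (s : ℝ)) * cgf0 p q ((s : ℝ) / (1 + (s : ℝ))) - (s : ℝ) * r)

open Real Set Finset

section LogSumExp

variable {ι : Type*} {s : Finset ι} {w : ι → ℝ}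

lemma sum_mul_exp_pos (hw : ∀ i, 0 ≤ w i) (hs : 0 < ∑ i ∈ s, w i) (c : ι → ℝ) (t : ℝ) :
    0 < ∑ i ∈ s, w i * exp (t * c i) := by
  obtain ⟨i, hi, hwi⟩ := exists_lt_of_sum_lt (f := 0) (g := w) (by simpa using hs)
  exact sum_pos' (fun j _ => mul_nonneg (hw j) (exp_pos _).le) ⟨i, hi, mul_pos hwi (exp_pos _)⟩

theorem convexOn_log_sum_mul_exp (hw : ∀ i, 0 ≤ w i) (hs : 0 < ∑ i ∈ s, w i) (c : ι → ℝ) :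
    ConvexOn ℝ univ fun t => log (∑ i ∈ s, w i * exp (t * c i)) := by
  refine convexOn_iff_forall_pos.2 ⟨convex_univ, fun x _ y _ a b ha hb hab => ?_⟩
  have hb' : b = 1 - a := by linarith
  subst hb'
  -- weighted Hölder with weights `w i * exp (y * c i)` and exponent `a⁻¹ ≥ 1`
  have holder := inner_le_weight_mul_Lp_of_nonneg s (one_le_inv₀ ha |>.2 (by linarith))
    (fun i => w i * exp (y * c i)) (fun i => exp (a * (x - y) * c i))
    (fun i => mul_nonneg (hw i) (exp_pos _).le) (fun i => (exp_pos _).le)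
  simp only [inv_inv, ← exp_mul, mul_assoc, ← exp_add] at holder
  have e1 : ∀ i, y * c i + a * ((x - y) * c i) = (a * x + (1 - a) * y) * c i := fun i => by ring
  have e2 : ∀ i, y * c i + a * ((x - y) * (c i * a⁻¹)) = x * c i := fun i => by field_simp; ring
  simp only [e1, e2] at holder
  have hU := sum_mul_exp_pos hw hs c x
  have hV := sum_mul_exp_pos hw hs c y
  simp only [smul_eq_mul]
  calc log (∑ i ∈ s, w i * exp ((a * x + (1 - a) * y) * c i))
      ≤ log ((∑ i ∈ s, w i * exp (y * c i)) ^ (1 - a) * (∑ i ∈ s, w i * exp (x * c i)) ^ a) :=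
        log_le_log (sum_mul_exp_pos hw hs c _) holder
    _ = a * log (∑ i ∈ s, w i * exp (x * c i)) + (1 - a) * log (∑ i ∈ s, w i * exp (y * c i)) := by
        rw [log_mul (rpow_pos_of_pos hV _).ne' (rpow_pos_of_pos hU _).ne', log_rpow hV,
          log_rpow hU, add_comm]

end LogSumExp

lemma rpow_one_sub_mul_rpow_eq_mul_exp {x y : ℝ} (hx : 0 ≤ x) (hy : 0 ≤ y) (hxy : 0 < x ↔ 0 < y)
    (t : ℝ) : x ^ (1 - t) * y ^ t = x * exp (t * log (y / x)) := by
  rcases hx.eq_or_lt with rfl | hx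
  · obtain rfl : y = 0 := le_antisymm (not_lt.1 (mt hxy.2 (lt_irrefl 0))) hy
    rcases eq_or_ne t 0 with rfl | ht
    · simp
    · simp [zero_rpow ht]
  · rw [rpow_def_of_pos hx, rpow_def_of_pos (hxy.1 hx), ← exp_add, log_div (hxy.1 hx).ne' hx.ne',
      ← exp_log hx, ← exp_add, log_exp]
    congr 1
    ring

section Cgf0

variable {p q : Ω → ℝ}

lemma cgf0_eq_log_sum_mul_exp (hp0 : ∀ ω, 0 ≤ p ω) (hq0 : ∀ ω, 0 ≤ q ω)
    (hsupp : ∀ ω, 0 < p ω ↔ 0 < q ω) (t : ℝ) :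
    cgf0 p q t = log (∑ ω, p ω * exp (t * log (q ω / p ω))) := by
  simp only [cgf0, rpow_one_sub_mul_rpow_eq_mul_exp (hp0 _) (hq0 _) (hsupp _)]

lemma cgf0_zero (hp1 : ∑ ω, p ω = 1) : cgf0 p q 0 = 0 := by
  simp [cgf0, hp1]

lemma cgf0_one (hq1 : ∑ ω, q ω = 1) : cgf0 p q 1 = 0 := by
  simp [cgf0, hq1]

lemma convexOn_cgf0 (hp0 : ∀ ω, 0 ≤ p ω) (hp1 : ∑ ω, p ω = 1) (hq0 : ∀ ω, 0 ≤ q ω)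
    (hsupp : ∀ ω, 0 < p ω ↔ 0 < q ω) : ConvexOn ℝ univ (cgf0 p q) := by
  have hcgf : cgf0 p q = fun t => log (∑ ω, p ω * exp (t * log (q ω / p ω))) :=
    funext (cgf0_eq_log_sum_mul_exp hp0 hq0 hsupp)
  rw [hcgf]
  exact convexOn_log_sum_mul_exp hp0 (hp1 ▸ one_pos) _

end Cgf0

section Legendre

variable (Λ : ℝ → ℝ)

def legendreObjective (z t : ℝ) : ℝ := t * z - Λ t

def hoeffdingObjective (r s : ℝ) : ℝ := -(1 + s) * Λ (s / (1 + s)) - s * r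

variable {Λ}

lemma concaveOn_legendreObjective (hΛ : ConvexOn ℝ univ Λ) (z : ℝ) :
    ConcaveOn ℝ univ (legendreObjective Λ z) :=
  ((LinearMap.mulRight ℝ z).concaveOn convex_univ).sub hΛ

lemma legendreObjective_eq_sub_hoeffdingObjective (φ r : ℝ) {s : ℝ} (hs : 0 ≤ s) :
    legendreObjective Λ (φ - r) (s / (1 + s)) =
      φ - (1 + s)⁻¹ * (φ - hoeffdingObjective Λ r s) := by
  simp only [legendreObjective, hoeffdingObjective]
  field_simp
  ring

lemma legendreObjective_mem_Icc {φ r s : ℝ} (hs : 0 ≤ s) (hφ : hoeffdingObjective Λ r s ≤ φ) :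
    legendreObjective Λ (φ - r) (s / (1 + s)) ∈ Icc (hoeffdingObjective Λ r s) φ := by
  rw [legendreObjective_eq_sub_hoeffdingObjective φ r hs, Set.mem_Icc, le_sub_comm, sub_le_self_iff]
  have hφ' : 0 ≤ φ - hoeffdingObjective Λ r s := sub_nonneg.2 hφ
  exact ⟨mul_le_of_le_one_left hφ' (inv_le_one_of_one_le₀ (by linarith)), by positivity⟩

theorem isGreatest_legendreObjective (hΛ : ConvexOn ℝ univ Λ) (hΛ0 : Λ 0 = 0) (hΛ1 : Λ 1 = 0)
    {r φ : ℝ} (hr : 0 < r) (hφ : 0 < φ)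
    (hlub : IsLUB (range fun s : Ici (0 : ℝ) => hoeffdingObjective Λ r s) φ) :
    IsGreatest (range (legendreObjective Λ (φ - r))) φ := by
  set g := legendreObjective Λ (φ - r)
  have hV : ∀ s : ℝ, 0 ≤ s → hoeffdingObjective Λ r s ≤ φ := fun s hs => hlub.1 ⟨⟨s, hs⟩, rfl⟩
  have hle : ∀ t ∈ Icc (0 : ℝ) 1, g t ≤ φ := by
    rintro t ⟨ht0, ht1⟩
    rcases ht1.lt_or_eq with ht1 | rfl
    · have hs : 0 ≤ t / (1 - t) := div_nonneg ht0 (by linarith)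
      have ht : t / (1 - t) / (1 + t / (1 - t)) = t := by
        field_simp
        ring
      simpa [ht] using (legendreObjective_mem_Icc hs (hV _ hs)).2
    · simp only [g, legendreObjective, hΛ1]
      linarith
  have hg : ContinuousOn g (Icc 0 1) :=
    ((concaveOn_legendreObjective hΛ _).continuousOn isOpen_univ).mono (subset_univ _)
  obtain ⟨t₀, ht₀, hmax⟩ := isCompact_Icc.exists_isMaxOn (nonempty_Icc.2 zero_le_one) hg
  have heq : g t₀ = φ := by
    refine le_antisymm (hle t₀ ht₀) (hlub.2 ?_)
    rintro _ ⟨⟨s, hs : 0 ≤ s⟩, rfl⟩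
    have hts : s / (1 + s) ∈ Icc (0 : ℝ) 1 :=
      ⟨by positivity, (div_le_one (by linarith)).2 (by linarith)⟩
    exact (legendreObjective_mem_Icc hs (hV s hs)).1.trans (hmax hts)
  have ht₀0 : t₀ ≠ 0 := by
    rintro rfl
    simp [g, legendreObjective, hΛ0, hφ.ne] at heq
  have ht₀1 : t₀ ≠ 1 := by
    rintro rfl
    simp only [g, legendreObjective, hΛ1] at heq
    linarith
  have hloc : IsLocalMax g t₀ :=
    Filter.eventually_of_mem (Icc_mem_nhds (ht₀.1.lt_of_ne' ht₀0) (ht₀.2.lt_of_ne ht₀1))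
      fun t ht => (hle t ht).trans heq.ge
  exact ⟨⟨t₀, heq⟩, forall_mem_range.2 fun t =>
    heq ▸ IsMaxOn.of_isLocalMax_of_convex_univ hloc (concaveOn_legendreObjective hΛ _) t⟩

end Legendre

/-- Legendre–Fenchel transform of the tilted cgf, part (b):
`Λ₀*(φ(r) - r) = φ(r)` whenever `r > -log Σ_{p>0} q` and `φ(r) > 0`. -/
theorem cgf0LF_at_shift (p q : Ω → ℝ)
    (hp0 : ∀ ω, 0 ≤ p ω) (hp1 : ∑ ω, p ω = 1)
    (hq0 : ∀ ω, 0 ≤ q ω) (hq1 : ∑ ω, q ω = 1)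
    (hsupp : ∀ ω, 0 < p ω ↔ 0 < q ω)
    (r : ℝ) (hr : -Real.log (∑ ω ∈ Finset.univ.filter (fun ω => 0 < p ω), q ω) < r)
    (hφ : 0 < hoeffdingLF p q r) :
    cgf0LF p q (hoeffdingLF p q r - r) = hoeffdingLF p q r := by
  have hr0 : 0 < r := by
    have hq : ∑ ω ∈ univ.filter (fun ω => 0 < p ω), q ω = 1 := by
      rw [sum_filter_of_ne fun ω _ hω => (hsupp ω).2 ((hq0 ω).lt_of_ne' hω), hq1]
    simpa [hq] using hr
  have hbdd : BddAbove (range fun s : Ici (0 : ℝ) => hoeffdingObjective (cgf0 p q) r s) := by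
    by_contra h
    exact hφ.ne' (Real.iSup_of_not_bddAbove h)
  exact (isGreatest_legendreObjective (convexOn_cgf0 hp0 hp1 hq0 hsupp) (cgf0_zero hp1)
    (cgf0_one hq1) hr0 hφ (isLUB_ciSup hbdd)).isLUB.ciSup_eq

end
end

section
/- (Strict positivity of the second derivative of the tilted cgf) Let p, q be probability distributions on a finite set Ω with common support, Λ_0(t) := log Σ_ω p(ω)^{1-t} q(ω)^t, and suppose r > -log Σ_{ω∈supp(p)} q(ω) and φ(r) := sup_{s≥0}{ s·D_{1/(1+s)}(p‖q) - sr } > 0. Then Λ_0''(t) > 0 for all t ∈ [0,1], where Λ_0''(t) equals the variance of log(q/p) under the tilted distribution q̂_t(ω) ∝ p(ω)^{1-t} q(ω)^t. -/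
/-!
`Λ₀''(t)` is the variance of `log (q / p)` under the tilted law `q̂_t`, which charges every point
of the common support of `p` and `q`. Two probability vectors that differ must have `p < q` at one
point and `q < p` at another, so `log (q / p)` takes two distinct values with positive weight and
the variance is positive. If instead `p = q`, then `Λ₀ ≡ 0` and `r > -log Σ_{supp p} q = 0`, so
`φ(r) = sup_{s ≥ 0} (-s r) = 0`, contradicting `φ(r) > 0`.
-/

open scoped BigOperators

noncomputable section

variable {Ω : Type*} [Fintype Ω]

/-- The tilted distribution `q̂_t ∝ p^{1-t} q^t`. -/
def tilted (p q : Ω → ℝ) (t : ℝ) (ω : Ω) : ℝ :=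
  p ω ^ (1 - t) * q ω ^ t / ∑ ω', p ω' ^ (1 - t) * q ω' ^ t

section WeightedVariance

variable {ι : Type*} [Fintype ι] {w x : ι → ℝ}

theorem weighted_variance_eq_sum_sq_sub (hw1 : ∑ i, w i = 1) :
    (∑ i, w i * x i ^ 2) - (∑ i, w i * x i) ^ 2 = ∑ i, w i * (x i - ∑ j, w j * x j) ^ 2 := by
  set m := ∑ j, w j * x j
  have expand : ∀ i, w i * (x i - m) ^ 2 = w i * x i ^ 2 - 2 * m * (w i * x i) + m ^ 2 * w i :=
    fun i => by ring
  simp only [expand, Finset.sum_add_distrib, Finset.sum_sub_distrib, ← Finset.mul_sum, hw1]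
  ring

theorem weighted_variance_pos (hw0 : ∀ i, 0 ≤ w i) (hw1 : ∑ i, w i = 1) {i j : ι}
    (hi : 0 < w i) (hj : 0 < w j) (hx : x i ≠ x j) :
    0 < (∑ k, w k * x k ^ 2) - (∑ k, w k * x k) ^ 2 := by
  rw [weighted_variance_eq_sum_sq_sub hw1]
  set m := ∑ k, w k * x k
  have h_off_mean : x i ≠ m ∨ x j ≠ m := by
    by_contra! h
    exact hx (h.1.trans h.2.symm)
  refine Finset.sum_pos' (fun k _ => mul_nonneg (hw0 k) (sq_nonneg _)) ?_
  rcases h_off_mean with h | h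
  · exact ⟨i, Finset.mem_univ _, mul_pos hi (sq_pos_of_ne_zero (sub_ne_zero.mpr h))⟩
  · exact ⟨j, Finset.mem_univ _, mul_pos hj (sq_pos_of_ne_zero (sub_ne_zero.mpr h))⟩

end WeightedVariance

theorem exists_lt_of_sum_eq_of_ne {ι : Type*} [Fintype ι] {f g : ι → ℝ}
    (hsum : ∑ i, f i = ∑ i, g i) (hne : f ≠ g) : ∃ i, f i < g i := by
  by_contra! hle
  refine hne (funext fun i => ?_)
  exact ((Finset.sum_eq_sum_iff_of_le fun i _ => hle i).mp hsum.symm i (Finset.mem_univ i)).symm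

section Tilted

variable {p q : Ω → ℝ}

theorem tilted_normalizer_pos (hp0 : ∀ ω, 0 ≤ p ω) (hq0 : ∀ ω, 0 ≤ q ω) {ω₀ : Ω}
    (hp : 0 < p ω₀) (hq : 0 < q ω₀) (t : ℝ) : 0 < ∑ ω, p ω ^ (1 - t) * q ω ^ t :=
  Finset.sum_pos' (fun ω _ => mul_nonneg (Real.rpow_nonneg (hp0 ω) _) (Real.rpow_nonneg (hq0 ω) _))
    ⟨ω₀, Finset.mem_univ _, mul_pos (Real.rpow_pos_of_pos hp _) (Real.rpow_pos_of_pos hq _)⟩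

theorem tilted_nonneg (hp0 : ∀ ω, 0 ≤ p ω) (hq0 : ∀ ω, 0 ≤ q ω) (t : ℝ) (ω : Ω) :
    0 ≤ tilted p q t ω :=
  div_nonneg (mul_nonneg (Real.rpow_nonneg (hp0 ω) _) (Real.rpow_nonneg (hq0 ω) _))
    (Finset.sum_nonneg fun ω _ =>
      mul_nonneg (Real.rpow_nonneg (hp0 ω) _) (Real.rpow_nonneg (hq0 ω) _))

theorem tilted_pos (hp0 : ∀ ω, 0 ≤ p ω) (hq0 : ∀ ω, 0 ≤ q ω) {ω : Ω}
    (hp : 0 < p ω) (hq : 0 < q ω) (t : ℝ) : 0 < tilted p q t ω :=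
  div_pos (mul_pos (Real.rpow_pos_of_pos hp _) (Real.rpow_pos_of_pos hq _))
    (tilted_normalizer_pos hp0 hq0 hp hq t)

theorem sum_tilted (hp0 : ∀ ω, 0 ≤ p ω) (hq0 : ∀ ω, 0 ≤ q ω) {ω₀ : Ω}
    (hp : 0 < p ω₀) (hq : 0 < q ω₀) (t : ℝ) : ∑ ω, tilted p q t ω = 1 := by
  simp only [tilted, ← Finset.sum_div]
  exact div_self (tilted_normalizer_pos hp0 hq0 hp hq t).ne'

end Tilted

theorem cgf0_self {p : Ω → ℝ} (hp0 : ∀ ω, 0 ≤ p ω) (hp1 : ∑ ω, p ω = 1) (t : ℝ) :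
    cgf0 p p t = 0 := by
  have hterm : ∀ ω, p ω ^ (1 - t) * p ω ^ t = p ω := fun ω => by
    rw [← Real.rpow_add' (hp0 ω) (by norm_num), sub_add_cancel, Real.rpow_one]
  simp only [cgf0, hterm, hp1, Real.log_one]

theorem hoeffdingLF_self_nonpos {p : Ω → ℝ} (hp0 : ∀ ω, 0 ≤ p ω) (hp1 : ∑ ω, p ω = 1)
    {r : ℝ} (hr : 0 ≤ r) : hoeffdingLF p p r ≤ 0 :=
  ciSup_le fun s => by
    rw [cgf0_self hp0 hp1, mul_zero, zero_sub, neg_nonpos]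
    exact mul_nonneg s.2 hr

/-- Strict positivity of the second derivative of the tilted cgf, where
`Λ₀''(t) = Var_{q̂_t}[log(q/p)]`. -/
theorem cgf0_second_deriv_pos (p q : Ω → ℝ)
    (hp0 : ∀ ω, 0 ≤ p ω) (hp1 : ∑ ω, p ω = 1)
    (hq0 : ∀ ω, 0 ≤ q ω) (hq1 : ∑ ω, q ω = 1)
    (hsupp : ∀ ω, 0 < p ω ↔ 0 < q ω)
    (r : ℝ) (hr : -Real.log (∑ ω ∈ Finset.univ.filter (fun ω => 0 < p ω), q ω) < r)
    (hφ : 0 < hoeffdingLF p q r) :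
    ∀ t ∈ Set.Icc (0 : ℝ) 1,
      0 < (∑ ω, tilted p q t ω * (Real.log (q ω / p ω)) ^ 2) -
            (∑ ω, tilted p q t ω * Real.log (q ω / p ω)) ^ 2 := by
  intro t _
  have hr0 : 0 < r := by
    have hsum : ∑ ω ∈ Finset.univ.filter (fun ω => 0 < p ω), q ω = 1 := by
      rw [Finset.sum_filter_of_ne fun ω _ hq => (hsupp ω).mpr ((hq0 ω).lt_of_ne' hq), hq1]
    rwa [hsum, Real.log_one, neg_zero] at hr
  have hne : p ≠ q := by
    rintro rfl
    exact (hoeffdingLF_self_nonpos hp0 hp1 hr0.le).not_gt hφ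
  obtain ⟨ω₁, hlt₁⟩ := exists_lt_of_sum_eq_of_ne (hp1.trans hq1.symm) hne
  obtain ⟨ω₂, hlt₂⟩ := exists_lt_of_sum_eq_of_ne (hq1.trans hp1.symm) hne.symm
  have hq₁ : 0 < q ω₁ := (hp0 ω₁).trans_lt hlt₁
  have hp₁ : 0 < p ω₁ := (hsupp ω₁).mpr hq₁
  have hp₂ : 0 < p ω₂ := (hq0 ω₂).trans_lt hlt₂
  have hq₂ : 0 < q ω₂ := (hsupp ω₂).mp hp₂
  have hratio : q ω₂ / p ω₂ < q ω₁ / p ω₁ :=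
    ((div_lt_one hp₂).mpr hlt₂).trans ((one_lt_div hp₁).mpr hlt₁)
  exact weighted_variance_pos (tilted_nonneg hp0 hq0 t) (sum_tilted hp0 hq0 hp₁ hq₁ t)
    (tilted_pos hp0 hq0 hp₁ hq₁ t) (tilted_pos hp0 hq0 hp₂ hq₂ t)
    (Real.log_lt_log (div_pos hq₂ hp₂) hratio).ne'

end
end

section
/- (Optimality condition for the symmetric channel) Let W : X → S(H) be a symmetric classical-quantum channel, i.e. W_x = V^{x-1} W_1 (V†)^{x-1} where V is unitary with V^{|X|} = 1. Then for the uniform distribution U on X and every α ∈ (0,1], Tr[W_x^α (U W^α)^{(1-α)/α}] = Tr[(U W^α)^{1/α}] for all x ∈ X, where U W^α := (1/|X|) Σ_x W_x^α. Consequently the uniform distribution maximizes the Gallager function E_0(s,P) for every s ≥ 0. -/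
open Matrix
open scoped BigOperators ComplexOrder

noncomputable section

variable {n : Type*} [Fintype n] [DecidableEq n]

/-- Gallager's auxiliary function `E₀(s,P) = -log Tr[(Σ_x P(x) W_x^{1/(1+s)})^{1+s}]`. -/
def gallagerE0 {d : ℕ} {X : Type*} [Fintype X] (W : X → Matrix (Fin d) (Fin d) ℂ)
    (s : ℝ) (P : X → ℝ) : ℝ :=
  -Real.log (((mPow (∑ x, ((P x : ℝ) : ℂ) • mPow (W x) (1 / (1 + s))) (1 + s)).trace).re)

/-!
Shifting the input of the channel by `g` conjugates every `W_x^α` by the unitary `V^g`. Hence the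
uniform mixture `A = (1/|X|) Σ_x W_x^α` commutes with every `V^g`, the trace `Tr[W_x^α A^β]`
does not depend on `x`, and averaging it over `x` gives `Tr[A^{1+β}]`.

For the Gallager function, the mixtures `Σ_y P(g + y) W_y^{1/(1+s)}` of the shifted distributions
are unitarily equivalent to the mixture of `P` and average to the uniform mixture. The trace form
of Jensen's inequality for the convex map `t ↦ t^{1+s}` then shows that the uniform distribution
minimises `Tr[(Σ_x P(x) W_x^{1/(1+s)})^{1+s}]`. That trace inequality follows from Peierls'
inequality `f(⟪u, B u⟫) ≤ ⟪u, f(B) u⟫` applied in an eigenbasis of the mixture.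
-/

lemma specFun_eq_cfc {A : Matrix n n ℂ} (hA : A.IsHermitian) (f : ℝ → ℝ) :
    specFun f A = cfc f A := by
  rw [hA.cfc_eq, specFun, dif_pos hA]
  rfl

lemma specFun_unitary_conj {A U : Matrix n n ℂ} (hA : A.IsHermitian) (hU : U ∈ unitaryGroup n ℂ)
    (f : ℝ → ℝ) : specFun f (U * A * star U) = U * specFun f A * star U := by
  have hconj : (U * A * star U).IsHermitian := (IsSelfAdjoint.conjugate hA U :)
  set φ := Unitary.conjStarAlgAut ℂ (Matrix n n ℂ) ⟨U, hU⟩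
  have := StarAlgHomClass.map_cfc φ f A (A.finite_real_spectrum.continuousOn f)
    (LinearMap.continuous_of_finiteDimensional (φ.toAlgEquiv.toLinearEquiv.toLinearMap))
  rw [specFun_eq_cfc hA, specFun_eq_cfc hconj]
  simpa [φ] using this.symm

lemma specFun_id {A : Matrix n n ℂ} (hA : A.IsHermitian) : specFun id A = A := by
  rw [specFun_eq_cfc hA]
  exact cfc_id ℝ A hA

lemma specFun_congr {A : Matrix n n ℂ} (hA : A.IsHermitian) {f g : ℝ → ℝ}
    (hfg : ∀ i, f (hA.eigenvalues i) = g (hA.eigenvalues i)) : specFun f A = specFun g A := by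
  simp only [specFun, dif_pos hA, hfg]

lemma trace_specFun {A : Matrix n n ℂ} (hA : A.IsHermitian) (f : ℝ → ℝ) :
    (specFun f A).trace = ∑ i, (f (hA.eigenvalues i) : ℂ) := by
  rw [specFun, dif_pos hA, trace_mul_cycle, Unitary.coe_star_mul_self, one_mul, trace_diagonal]

lemma trace_specFun_unitary_conj {A U : Matrix n n ℂ} (hA : A.IsHermitian)
    (hU : U ∈ unitaryGroup n ℂ) (f : ℝ → ℝ) :
    (specFun f (U * A * star U)).trace = (specFun f A).trace := by
  rw [specFun_unitary_conj hA hU, trace_mul_cycle, mem_unitaryGroup_iff'.mp hU, one_mul]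

lemma posSemidef_specFun {A : Matrix n n ℂ} (hA : A.IsHermitian) {f : ℝ → ℝ}
    (hf : ∀ i, 0 ≤ f (hA.eigenvalues i)) : (specFun f A).PosSemidef := by
  rw [specFun, dif_pos hA, star_eq_conjTranspose]
  exact (PosSemidef.diagonal fun i => Complex.zero_le_real.mpr (hf i)).mul_mul_conjTranspose_same _

lemma posSemidef_mPow {A : Matrix n n ℂ} (hA : A.PosSemidef) (p : ℝ) : (mPow A p).PosSemidef :=
  posSemidef_specFun hA.isHermitian fun i => Real.rpow_nonneg (hA.eigenvalues_nonneg i) p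

lemma mul_specFun {A : Matrix n n ℂ} (hA : A.IsHermitian) (f : ℝ → ℝ) :
    A * specFun f A = specFun (fun x => x * f x) A := by
  have hid : cfc (fun x : ℝ => x) A = A := cfc_id' ℝ A hA
  rw [specFun_eq_cfc hA, specFun_eq_cfc hA, cfc_mul (fun x => x) f A
    (A.finite_real_spectrum.continuousOn _) (A.finite_real_spectrum.continuousOn _), hid]

lemma mul_mPow {A : Matrix n n ℂ} (hA : A.PosSemidef) {β : ℝ} (hβ : 1 + β ≠ 0) :
    A * mPow A β = mPow A (1 + β) := by
  rw [mPow, mul_specFun hA.isHermitian, mPow]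
  exact specFun_congr hA.isHermitian fun i => by
    rw [Real.rpow_add' (hA.eigenvalues_nonneg i) hβ, Real.rpow_one]

lemma re_trace_mPow_pos {A : Matrix n n ℂ} (hA : A.PosSemidef) (htr : 0 < A.trace.re) (p : ℝ) :
    0 < (mPow A p).trace.re := by
  rw [hA.isHermitian.trace_eq_sum_eigenvalues, Complex.re_sum] at htr
  obtain ⟨i, -, hi⟩ := Finset.exists_lt_of_sum_lt (f := fun _ => (0 : ℝ)) (by simpa using htr)
  rw [mPow, trace_specFun hA.isHermitian, Complex.re_sum]
  exact Finset.sum_pos' (fun j _ => Real.rpow_nonneg (hA.eigenvalues_nonneg j) p)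
    ⟨i, Finset.mem_univ i, Real.rpow_pos_of_pos (by simpa using hi) p⟩

omit [Fintype n] [DecidableEq n] in
lemma posSemidef_sum_smul {K : Type*} [Fintype K] {c : K → ℝ} (hc : ∀ k, 0 ≤ c k)
    {B : K → Matrix n n ℂ} (hB : ∀ k, (B k).PosSemidef) :
    (∑ k, (c k : ℂ) • B k).PosSemidef :=
  posSemidef_sum _ fun k _ => (hB k).smul (Complex.zero_le_real.mpr (hc k))

omit [DecidableEq n] in
lemma re_trace_sum_smul_pos {K : Type*} [Fintype K] [Nonempty K] {w : K → ℝ} (hw : ∀ k, 0 < w k)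
    {B : K → Matrix n n ℂ} (hB : ∀ k, 0 < (B k).trace.re) :
    0 < (∑ k, (w k : ℂ) • B k).trace.re := by
  simp only [trace_sum, trace_smul, smul_eq_mul, Complex.re_sum, Complex.re_ofReal_mul]
  exact Finset.sum_pos (fun k _ => mul_pos (hw k) (hB k)) Finset.univ_nonempty

lemma trace_star_mul_mul {U : Matrix n n ℂ} (hU : U ∈ unitaryGroup n ℂ) (X : Matrix n n ℂ) :
    (star U * X * U).trace = X.trace := by
  rw [trace_mul_cycle, mem_unitaryGroup_iff.mp hU, one_mul]

lemma re_star_mul_diagonal_mul_apply_self (T : Matrix n n ℂ) (d : n → ℝ) (i : n) :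
    ((star T * diagonal (fun j => (d j : ℂ)) * T) i i).re = ∑ j, Complex.normSq (T j i) * d j := by
  rw [mul_apply, Complex.re_sum]
  refine Finset.sum_congr rfl fun j _ => ?_
  rw [mul_diagonal, star_apply, Complex.star_def, mul_right_comm, ← Complex.normSq_eq_conj_mul_self,
    ← Complex.ofReal_mul, Complex.ofReal_re]

lemma sum_normSq_apply_eq_one {T : Matrix n n ℂ} (hT : T ∈ unitaryGroup n ℂ) (i : n) :
    ∑ j, Complex.normSq (T j i) = 1 := by
  have h := re_star_mul_diagonal_mul_apply_self T (fun _ => 1) i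
  simp only [Complex.ofReal_one, diagonal_one, mul_one, mem_unitaryGroup_iff'.mp hT] at h
  simpa using h.symm

section Peierls

variable {B U : Matrix n n ℂ} (hB : B.IsHermitian) (hU : U ∈ unitaryGroup n ℂ)
include hB

lemma re_star_mul_specFun_mul_apply_self (f : ℝ → ℝ) (i : n) :
    ((star U * specFun f B * U) i i).re =
      ∑ j, Complex.normSq ((star (hB.eigenvectorUnitary : Matrix n n ℂ) * U) j i) *
        f (hB.eigenvalues j) := by
  rw [← re_star_mul_diagonal_mul_apply_self, specFun, dif_pos hB, star_mul, star_star]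
  simp only [Matrix.mul_assoc]

lemma re_star_mul_mul_apply_self (i : n) :
    ((star U * B * U) i i).re =
      ∑ j, Complex.normSq ((star (hB.eigenvectorUnitary : Matrix n n ℂ) * U) j i) *
        hB.eigenvalues j := by
  conv_lhs => rw [← specFun_id hB]
  exact re_star_mul_specFun_mul_apply_self hB id i

include hU

lemma sum_normSq_star_eigenvectorUnitary_mul_apply (i : n) :
    ∑ j, Complex.normSq ((star (hB.eigenvectorUnitary : Matrix n n ℂ) * U) j i) = 1 :=
  sum_normSq_apply_eq_one (mul_mem (Unitary.star_mem hB.eigenvectorUnitary.2) hU) i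

lemma Convex.re_star_mul_mul_apply_self_mem {s : Set ℝ} (hs : Convex ℝ s)
    (hspec : ∀ j, hB.eigenvalues j ∈ s) (i : n) : ((star U * B * U) i i).re ∈ s := by
  rw [re_star_mul_mul_apply_self hB]
  exact hs.sum_mem (fun j _ => Complex.normSq_nonneg _)
    (sum_normSq_star_eigenvectorUnitary_mul_apply hB hU i) fun j _ => hspec j

/-- Peierls' inequality for the diagonal entries in an orthonormal basis. -/
theorem ConvexOn.map_re_star_mul_mul_apply_self_le {s : Set ℝ} {f : ℝ → ℝ} (hf : ConvexOn ℝ s f)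
    (hspec : ∀ j, hB.eigenvalues j ∈ s) (i : n) :
    f ((star U * B * U) i i).re ≤ ((star U * specFun f B * U) i i).re := by
  rw [re_star_mul_mul_apply_self hB, re_star_mul_specFun_mul_apply_self hB]
  exact hf.map_sum_le (fun j _ => Complex.normSq_nonneg _)
    (sum_normSq_star_eigenvectorUnitary_mul_apply hB hU i) fun j _ => hspec j

end Peierls

lemma re_trace_eq_sum_re_star_mul_mul_apply_self {U : Matrix n n ℂ} (hU : U ∈ unitaryGroup n ℂ)
    (X : Matrix n n ℂ) : X.trace.re = ∑ i, ((star U * X * U) i i).re := by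
  rw [← trace_star_mul_mul hU X, trace, Complex.re_sum]
  rfl

lemma Matrix.IsHermitian.eigenvalues_eq_re_star_mul_mul_apply_self {A : Matrix n n ℂ}
    (hA : A.IsHermitian) (i : n) : hA.eigenvalues i =
      ((star (hA.eigenvectorUnitary : Matrix n n ℂ) * A * hA.eigenvectorUnitary) i i).re := by
  have h := hA.conjStarAlgAut_star_eigenvectorUnitary
  rw [Unitary.conjStarAlgAut_star_apply] at h
  simp [h]

theorem ConvexOn.re_trace_specFun_sum_le {K : Type*} [Fintype K] {s : Set ℝ} {f : ℝ → ℝ}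
    (hf : ConvexOn ℝ s f) {w : K → ℝ} (hw₀ : ∀ k, 0 ≤ w k) (hw₁ : ∑ k, w k = 1)
    {B : K → Matrix n n ℂ} (hB : ∀ k, (B k).IsHermitian)
    (hspec : ∀ k j, (hB k).eigenvalues j ∈ s) :
    (specFun f (∑ k, (w k : ℂ) • B k)).trace.re ≤ ∑ k, w k * (specFun f (B k)).trace.re := by
  have hM : (∑ k, (w k : ℂ) • B k).IsHermitian :=
    isSelfAdjoint_sum _ fun k _ => (hB k).smul (Complex.conj_ofReal (w k))
  set E : Matrix n n ℂ := (hM.eigenvectorUnitary : Matrix n n ℂ)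
  have hE : E ∈ unitaryGroup n ℂ := hM.eigenvectorUnitary.2
  set d : K → n → ℝ := fun k i => ((star E * B k * E) i i).re
  have hμ : ∀ i, hM.eigenvalues i = ∑ k, w k * d k i := by
    intro i
    rw [hM.eigenvalues_eq_re_star_mul_mul_apply_self, Finset.mul_sum, Finset.sum_mul,
      Matrix.sum_apply, Complex.re_sum]
    simp only [Matrix.mul_smul, Matrix.smul_mul, Matrix.smul_apply, smul_eq_mul,
      Complex.re_ofReal_mul, d, E]
  calc (specFun f (∑ k, (w k : ℂ) • B k)).trace.re
      = ∑ i, f (∑ k, w k * d k i) := by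
        simp only [trace_specFun hM, Complex.re_sum, Complex.ofReal_re, hμ]
    _ ≤ ∑ i, ∑ k, w k * f (d k i) := Finset.sum_le_sum fun i _ =>
        hf.map_sum_le (fun k _ => hw₀ k) hw₁ fun k _ =>
          hf.1.re_star_mul_mul_apply_self_mem (hB k) hE (hspec k) i
    _ ≤ ∑ i, ∑ k, w k * ((star E * specFun f (B k) * E) i i).re :=
        Finset.sum_le_sum fun i _ => Finset.sum_le_sum fun k _ => mul_le_mul_of_nonneg_left
          (hf.map_re_star_mul_mul_apply_self_le (hB k) hE (hspec k) i) (hw₀ k)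
    _ = ∑ k, w k * (specFun f (B k)).trace.re := by
        rw [Finset.sum_comm]
        simp only [re_trace_eq_sum_re_star_mul_mul_apply_self hE, Finset.mul_sum]

section Covariant

variable {G : Type*} [AddGroup G]

def IsCovariant (ρ F : G → Matrix n n ℂ) : Prop :=
  ∀ g h, F (g + h) = ρ g * F h * star (ρ g)

lemma isCovariant_pow {m : ℕ} [NeZero m] {V : Matrix n n ℂ} (hV : V ^ m = 1) (A : Matrix n n ℂ) :
    IsCovariant (fun x : Fin m => V ^ (x : ℕ)) fun x => V ^ (x : ℕ) * A * star V ^ (x : ℕ) := by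
  have hV' : star V ^ m = 1 := by rw [← star_pow, hV, star_one]
  intro g h
  simp only [Fin.val_add, ← pow_eq_pow_mod _ hV, ← pow_eq_pow_mod _ hV', pow_add, star_pow,
    Matrix.mul_assoc]
  rw [← pow_add, ← pow_add, add_comm]

variable {ρ F : G → Matrix n n ℂ} (hρ : ∀ g, ρ g ∈ unitaryGroup n ℂ)

omit [DecidableEq n] in
lemma IsCovariant.conj_sum [Fintype G] (hF : IsCovariant ρ F) (g : G) :
    ρ g * (∑ h, F h) * star (ρ g) = ∑ h, F h := by
  simp only [Finset.mul_sum, Finset.sum_mul, ← hF g]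
  exact Equiv.sum_comp (Equiv.addLeft g) F

include hρ

lemma IsCovariant.map_specFun (hF : IsCovariant ρ F) (hherm : ∀ g, (F g).IsHermitian)
    (f : ℝ → ℝ) : IsCovariant ρ fun g => specFun f (F g) := fun g h => by
  simp only [hF g h, specFun_unitary_conj (hherm h) (hρ g)]

lemma IsCovariant.star_mul_mul (hF : IsCovariant ρ F) (g h : G) :
    star (ρ g) * F (g + h) * ρ g = F h := by
  have hρ' := mem_unitaryGroup_iff'.mp (hρ g)
  rw [hF g h, ← Matrix.mul_assoc, ← Matrix.mul_assoc, hρ', one_mul, Matrix.mul_assoc, hρ', mul_one]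

variable [Fintype G]

lemma IsCovariant.star_mul_sum_smul_mul (hF : IsCovariant ρ F) (c : G → ℂ) (g : G) :
    star (ρ g) * (∑ y, c y • F y) * ρ g = ∑ y, c (g + y) • F y := by
  simp only [Finset.mul_sum, Finset.sum_mul, Matrix.mul_smul, Matrix.smul_mul]
  rw [← Equiv.sum_comp (Equiv.addLeft g)]
  simp only [Equiv.coe_addLeft, hF.star_mul_mul hρ]

lemma IsCovariant.trace_mul_eq (hF : IsCovariant ρ F) {C : Matrix n n ℂ}
    (hC : ∀ g, ρ g * C * star (ρ g) = C) (g : G) :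
    (F g * C).trace = (((Fintype.card G : ℂ)⁻¹ • ∑ h, F h) * C).trace := by
  have hconst : ∀ g, (F g * C).trace = (F 0 * C).trace := fun g => by
    have hC' : star (ρ g) * (C * ρ g) = C := by
      simpa only [Matrix.mul_assoc] using
        IsCovariant.star_mul_mul (F := fun _ => C) hρ (fun g _ => (hC g).symm) g 0
    rw [← add_zero g, hF g 0]
    simp only [Matrix.mul_assoc]
    rw [trace_mul_comm]
    simp only [Matrix.mul_assoc, hC']
  rw [Matrix.smul_mul, trace_smul, Matrix.sum_mul, trace_sum,
    Finset.sum_congr rfl fun h _ => hconst h,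
    Finset.sum_const, Finset.card_univ, nsmul_eq_mul, smul_eq_mul, ← mul_assoc,
    inv_mul_cancel₀ (Nat.cast_ne_zero.mpr Fintype.card_ne_zero), one_mul, hconst g]

lemma IsCovariant.trace_mul_specFun_average (hF : IsCovariant ρ F)
    (hherm : ∀ g, (F g).IsHermitian) (f : ℝ → ℝ) (g : G) :
    (F g * specFun f ((Fintype.card G : ℂ)⁻¹ • ∑ h, F h)).trace =
      (((Fintype.card G : ℂ)⁻¹ • ∑ h, F h) *
        specFun f ((Fintype.card G : ℂ)⁻¹ • ∑ h, F h)).trace := by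
  have hA : ((Fintype.card G : ℂ)⁻¹ • ∑ h, F h).IsHermitian :=
    ((IsSelfAdjoint.natCast (R := ℂ) _).inv₀.smul (isSelfAdjoint_sum _ fun h _ => hherm h) :)
  refine hF.trace_mul_eq hρ (fun g => ?_) g
  rw [← specFun_unitary_conj hA (hρ g), Matrix.mul_smul, Matrix.smul_mul, hF.conj_sum]

theorem IsCovariant.re_trace_specFun_uniform_le (hF : IsCovariant ρ F)
    (hpsd : ∀ g, (F g).PosSemidef) {f : ℝ → ℝ} (hf : ConvexOn ℝ (Set.Ici 0) f) {P : G → ℝ}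
    (hP₀ : ∀ g, 0 ≤ P g) (hP₁ : ∑ g, P g = 1) :
    (specFun f (∑ g, (((Fintype.card G : ℝ)⁻¹ : ℝ) : ℂ) • F g)).trace.re ≤
      (specFun f (∑ g, (P g : ℂ) • F g)).trace.re := by
  set M := ∑ g, (P g : ℂ) • F g
  have hM : M.PosSemidef := posSemidef_sum_smul hP₀ hpsd
  set N : G → Matrix n n ℂ := fun g => ∑ y, (P (g + y) : ℂ) • F y
  have hN : ∀ g, (N g).PosSemidef := fun g => posSemidef_sum_smul (fun y => hP₀ (g + y)) hpsd
  have hw₁ : ∑ _g : G, (Fintype.card G : ℝ)⁻¹ = 1 := by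
    rw [Finset.sum_const, Finset.card_univ, nsmul_eq_mul,
      mul_inv_cancel₀ (Nat.cast_ne_zero.mpr Fintype.card_ne_zero)]
  have hshift_sum : ∀ y, ∑ g, (P (g + y) : ℂ) = 1 := fun y => by
    exact_mod_cast (Equiv.sum_comp (Equiv.addRight y) P).trans hP₁
  have huniform : ∑ y, (((Fintype.card G : ℝ)⁻¹ : ℝ) : ℂ) • F y =
      ∑ g, (((Fintype.card G : ℝ)⁻¹ : ℝ) : ℂ) • N g := by
    simp only [N, Finset.smul_sum, smul_smul]
    rw [Finset.sum_comm]
    refine Finset.sum_congr rfl fun y _ => ?_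
    rw [← Finset.sum_smul, ← Finset.mul_sum, hshift_sum, mul_one]
  have htrace : ∀ g, (specFun f (N g)).trace.re = (specFun f M).trace.re := fun g => by
    have h := trace_specFun_unitary_conj hM.isHermitian (Unitary.star_mem (hρ g)) f
    rw [star_star, hF.star_mul_sum_smul_mul hρ] at h
    rw [h]
  calc (specFun f (∑ y, (((Fintype.card G : ℝ)⁻¹ : ℝ) : ℂ) • F y)).trace.re
      = (specFun f (∑ g, (((Fintype.card G : ℝ)⁻¹ : ℝ) : ℂ) • N g)).trace.re := by rw [huniform]
    _ ≤ ∑ g, (Fintype.card G : ℝ)⁻¹ * (specFun f (N g)).trace.re :=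
        hf.re_trace_specFun_sum_le (fun _ => by positivity) hw₁ (fun g => (hN g).isHermitian)
          fun g j => (hN g).eigenvalues_nonneg j
    _ = (specFun f M).trace.re := by simp only [htrace, ← Finset.sum_mul, hw₁, one_mul]

end Covariant

/-- Optimality condition for symmetric classical-quantum channels: for
`W_x = V^x W_0 (V†)^x` with `V` unitary of order `|X|`, the uniform distribution
satisfies `Tr[W_x^α (U W^α)^{(1-α)/α}] = Tr[(U W^α)^{1/α}]` for all `x` and `α ∈ (0,1]`,
and consequently maximizes Gallager's function `E₀(s,·)` for every `s ≥ 0`. -/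
theorem symmetric_channel_uniform_optimal {d m : ℕ} (hm : 0 < m)
    (W : Fin m → Matrix (Fin d) (Fin d) ℂ) (hW : ∀ x, IsDensity (W x))
    (V : Matrix (Fin d) (Fin d) ℂ) (hV : V ∈ Matrix.unitaryGroup (Fin d) ℂ)
    (hVm : V ^ m = 1)
    (hsym : ∀ x : Fin m, W x = V ^ (x : ℕ) * W ⟨0, hm⟩ * (star V) ^ (x : ℕ)) :
    (∀ α ∈ Set.Ioc (0 : ℝ) 1, ∀ x : Fin m,
      ((mPow (W x) α *
          mPow (((m : ℂ))⁻¹ • ∑ x', mPow (W x') α) ((1 - α) / α)).trace).re =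
        ((mPow (((m : ℂ))⁻¹ • ∑ x', mPow (W x') α) (1 / α)).trace).re) ∧
    (∀ s : ℝ, 0 ≤ s → ∀ P : Fin m → ℝ, (∀ x, 0 ≤ P x) → ∑ x, P x = 1 →
      gallagerE0 W s P ≤ gallagerE0 W s (fun _ => (m : ℝ)⁻¹)) := by
  have : NeZero m := ⟨hm.ne'⟩
  have hρ : ∀ x : Fin m, V ^ (x : ℕ) ∈ unitaryGroup (Fin d) ℂ := fun x => pow_mem hV _
  have hcov : IsCovariant (fun x : Fin m => V ^ (x : ℕ)) W := fun g h => by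
    rw [hsym, hsym h]
    exact isCovariant_pow hVm _ g h
  have hB : ∀ r x, (mPow (W x) r).PosSemidef := fun r x => posSemidef_mPow (hW x).1 r
  have hcovB : ∀ r, IsCovariant (fun x : Fin m => V ^ (x : ℕ)) fun x => mPow (W x) r :=
    fun r => hcov.map_specFun hρ (fun x => (hW x).1.isHermitian) _
  refine ⟨fun α hα x => ?_, fun s hs P hP₀ hP₁ => ?_⟩
  · set A := (m : ℂ)⁻¹ • ∑ x', mPow (W x') α
    have hA : A.PosSemidef := (posSemidef_sum _ fun x _ => hB α x).smul (by positivity)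
    have hβ : 1 + (1 - α) / α = 1 / α := by field_simp [hα.1.ne']; ring
    have h := (hcovB α).trace_mul_specFun_average hρ (fun x => (hB α x).isHermitian)
      (· ^ ((1 - α) / α)) x
    rw [Fintype.card_fin] at h
    rw [← hβ, ← mul_mPow hA (by rw [hβ]; exact one_div_ne_zero hα.1.ne')]
    exact congrArg Complex.re h
  · have hle := (hcovB (1 / (1 + s))).re_trace_specFun_uniform_le hρ (hB _)
      (convexOn_rpow (p := 1 + s) (by linarith)) hP₀ hP₁
    rw [Fintype.card_fin] at hle
    have htr : 0 < (∑ x, (((m : ℝ)⁻¹ : ℝ) : ℂ) • mPow (W x) (1 / (1 + s))).trace.re :=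
      re_trace_sum_smul_pos (fun _ => by positivity) fun x =>
        re_trace_mPow_pos (hW x).1 (by simp [(hW x).2]) _
    have hpos := re_trace_mPow_pos
      (posSemidef_sum_smul (fun _ => by positivity) (hB (1 / (1 + s)))) htr (1 + s)
    exact neg_le_neg (Real.log_le_log hpos hle)
end
end
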